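/- arXiv:1905.08964 — 8 statements merged into one kernel-verified Lean document; each statement's English description precedes it below -/
import Mathlib

section
/- Let α, β, 𝐞, 𝐦 : ℝ × [0,∞) → ℝ be smooth and satisfy −∂_r(e^{−β}) = r e^{β} 𝐞 and −∂_t(e^{−β}) = r e^{α} 𝐦 everywhere. Assume: (i) for each t, the function r ↦ r e^{β(t,r)} 𝐞(t,r) is integrable on [0,∞); (ii) for every compact interval I of times there is an integrable function g on [0,∞) with |∂_t( r e^{β(t,r)} 𝐞(t,r) )| ≤ g(r) for all t ∈ I and r ≥ 0; (iii) for each t, r e^{α(t,r)} 𝐦(t,r) → 0 as r → ∞. Then the total energy E(t) := 2π ∫_0^∞ 𝐞(t,r) r e^{β(t,r)} dr is constant in t. -/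
open Real MeasureTheory Set

private lemma partial_fst {E : Type*} [NormedAddCommGroup E] [NormedSpace ℝ E]
    {f : ℝ × ℝ → E} (hf : ContDiff ℝ (⊤ : ℕ∞) f) (t r : ℝ) :
    HasDerivAt (fun t' => f (t', r)) (fderiv ℝ f (t, r) (1, 0)) t := by
  have h1 : HasDerivAt (fun t' : ℝ => (t', r)) ((1:ℝ), (0:ℝ)) t :=
    (hasDerivAt_id t).prodMk (hasDerivAt_const t r)
  exact ((hf.differentiable (by simp) (t, r)).hasFDerivAt).comp_hasDerivAt t h1

private lemma partial_snd {E : Type*} [NormedAddCommGroup E] [NormedSpace ℝ E]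
    {f : ℝ × ℝ → E} (hf : ContDiff ℝ (⊤ : ℕ∞) f) (t r : ℝ) :
    HasDerivAt (fun r' => f (t, r')) (fderiv ℝ f (t, r) (0, 1)) r := by
  have h1 : HasDerivAt (fun r' : ℝ => (t, r')) ((0:ℝ), (1:ℝ)) r :=
    (hasDerivAt_const r t).prodMk (hasDerivAt_id r)
  exact ((hf.differentiable (by simp) (t, r)).hasFDerivAt).comp_hasDerivAt r h1

/-- Proposition 3.1, conservation of energy: under the two Einstein constraint
equations, integrability and domination hypotheses, and decay of the momentum flux at spatial
infinity, the total energy `E(t) = 2π ∫₀^∞ 𝐞(t,r) r e^{β(t,r)} dr` is constant in `t`. -/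
theorem energy_conservation
    (α β ee mm : ℝ → ℝ → ℝ)
    (hα : ContDiff ℝ (⊤ : ℕ∞) (fun p : ℝ × ℝ => α p.1 p.2))
    (hβ : ContDiff ℝ (⊤ : ℕ∞) (fun p : ℝ × ℝ => β p.1 p.2))
    (hee : ContDiff ℝ (⊤ : ℕ∞) (fun p : ℝ × ℝ => ee p.1 p.2))
    (hmm : ContDiff ℝ (⊤ : ℕ∞) (fun p : ℝ × ℝ => mm p.1 p.2))
    (hconstr1 : ∀ t r : ℝ, 0 ≤ r →
      -deriv (fun r' => Real.exp (-β t r')) r = r * Real.exp (β t r) * ee t r)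
    (hconstr2 : ∀ t r : ℝ, 0 ≤ r →
      -deriv (fun t' => Real.exp (-β t' r)) t = r * Real.exp (α t r) * mm t r)
    (hint : ∀ t : ℝ, IntegrableOn (fun r => r * Real.exp (β t r) * ee t r) (Ioi 0))
    (hdom : ∀ a b : ℝ, ∃ g : ℝ → ℝ, IntegrableOn g (Ioi 0) ∧
      ∀ t ∈ Icc a b, ∀ r : ℝ, 0 ≤ r →
        |deriv (fun t' => r * Real.exp (β t' r) * ee t' r) t| ≤ g r)
    (hdecay : ∀ t : ℝ,
      Filter.Tendsto (fun r => r * Real.exp (α t r) * mm t r) Filter.atTop (nhds 0)) :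
    ∀ t s : ℝ,
      2 * π * ∫ r in Ioi (0:ℝ), ee t r * r * Real.exp (β t r)
        = 2 * π * ∫ r in Ioi (0:ℝ), ee s r * r * Real.exp (β s r) := by
  -- Notation
  set h : ℝ × ℝ → ℝ := fun p => Real.exp (-β p.1 p.2) with hh_def
  have hsm : ContDiff ℝ (⊤ : ℕ∞) h := Real.contDiff_exp.comp hβ.neg
  set F' : ℝ × ℝ → (ℝ × ℝ) →L[ℝ] ℝ := fderiv ℝ h with hF'_def
  have hF'sm : ContDiff ℝ (⊤ : ℕ∞) F' := hsm.fderiv_right (by simp)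
  set F'' : ℝ × ℝ → (ℝ × ℝ) →L[ℝ] (ℝ × ℝ) →L[ℝ] ℝ := fderiv ℝ F' with hF''_def
  have hF''sm : ContDiff ℝ (⊤ : ℕ∞) F'' := hF'sm.fderiv_right (by simp)
  -- the smooth integrand Φ and flux Ψ
  set Φ : ℝ × ℝ → ℝ := fun p => p.2 * Real.exp (β p.1 p.2) * ee p.1 p.2 with hΦ_def
  have hΦsm : ContDiff ℝ (⊤ : ℕ∞) Φ :=
    (contDiff_snd.mul (Real.contDiff_exp.comp hβ)).mul hee
  set Ψ : ℝ × ℝ → ℝ := fun p => p.2 * Real.exp (α p.1 p.2) * mm p.1 p.2 with hΨ_def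
  have hΨsm : ContDiff ℝ (⊤ : ℕ∞) Ψ :=
    (contDiff_snd.mul (Real.contDiff_exp.comp hα)).mul hmm
  -- the time derivative of the integrand
  set D : ℝ → ℝ → ℝ := fun t r => deriv (fun t' => r * Real.exp (β t' r) * ee t' r) t
    with hD_def
  -- Step A : Φ(t,r) = -F'(t,r)(0,1) for r ≥ 0
  have stepA : ∀ t r : ℝ, 0 ≤ r → Φ (t, r) = -(F' (t, r) (0, 1)) := by
    intro t r hr
    have h1 : deriv (fun r' => Real.exp (-β t r')) r = F' (t, r) (0, 1) :=
      (partial_snd hsm t r).deriv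
    have h2 : Φ (t, r) = -deriv (fun r' => Real.exp (-β t r')) r := (hconstr1 t r hr).symm
    rw [h2, h1]
  -- Step B : Ψ(t,r) = -F'(t,r)(1,0) for r ≥ 0
  have stepB : ∀ t r : ℝ, 0 ≤ r → Ψ (t, r) = -(F' (t, r) (1, 0)) := by
    intro t r hr
    have h1 : deriv (fun t' => Real.exp (-β t' r)) t = F' (t, r) (1, 0) :=
      (partial_fst hsm t r).deriv
    have h2 : Ψ (t, r) = -deriv (fun t' => Real.exp (-β t' r)) t := (hconstr2 t r hr).symm
    rw [h2, h1]
  -- D via Φ : D t r is the value of the smooth partial derivative of Φ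
  have hDΦ : ∀ t r : ℝ, HasDerivAt (fun t' => r * Real.exp (β t' r) * ee t' r)
      (fderiv ℝ Φ (t, r) (1, 0)) t := fun t r => partial_fst hΦsm t r
  have hDval : ∀ t r : ℝ, D t r = fderiv ℝ Φ (t, r) (1, 0) := fun t r => (hDΦ t r).deriv
  have hDcont : ∀ t : ℝ, Continuous (fun r => D t r) := by
    intro t
    have : Continuous (fun r : ℝ => fderiv ℝ Φ (t, r) (1, 0)) := by
      have hc : Continuous (fderiv ℝ Φ) := (hΦsm.fderiv_right (m := (⊤ : ℕ∞)) (by simp)).continuous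
      exact (hc.comp (continuous_const.prodMk continuous_id)).clm_apply continuous_const
    simpa only [← hDval] using this
  -- Step C : for r > 0, D t r = -(F'' (t,r) (1,0)) (0,1)
  have stepC : ∀ t r : ℝ, 0 < r → D t r = -(F'' (t, r) (1, 0)) (0, 1) := by
    intro t r hr
    have heq : (fun t' => r * Real.exp (β t' r) * ee t' r)
        = fun t' => -(F' (t', r) (0, 1)) := by
      funext t'
      exact stepA t' r hr.le
    have hd : HasDerivAt (fun t' => F' (t', r)) (F'' (t, r) (1, 0)) t :=
      partial_fst hF'sm t r
    have hd2 : HasDerivAt (fun t' => F' (t', r) (0, 1)) ((F'' (t, r) (1, 0)) (0, 1)) t := by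
      have := hd.clm_apply (hasDerivAt_const t ((0:ℝ), (1:ℝ)))
      simpa using this
    rw [hD_def]
    simp only [heq]
    exact hd2.neg.deriv
  -- Step D : for r > 0, HasDerivAt (Ψ (t, ·)) (-(F'' (t,r) (0,1)) (1,0)) r
  have stepD : ∀ t r : ℝ, 0 < r →
      HasDerivAt (fun r' => Ψ (t, r')) (-(F'' (t, r) (0, 1)) (1, 0)) r := by
    intro t r hr
    have hd : HasDerivAt (fun r' => F' (t, r')) (F'' (t, r) (0, 1)) r :=
      partial_snd hF'sm t r
    have hd2 : HasDerivAt (fun r' => -(F' (t, r') (1, 0))) (-(F'' (t, r) (0, 1)) (1, 0)) r := by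
      have := (hd.clm_apply (hasDerivAt_const r ((1:ℝ), (0:ℝ)))).neg
      simp at this
      exact this
    apply hd2.congr_of_eventuallyEq
    filter_upwards [isOpen_Ioi.mem_nhds hr] with r' hr'
    exact stepB t r' (le_of_lt hr')
  -- symmetry of second derivatives
  have hsymm : ∀ t r : ℝ, (F'' (t, r) (1, 0)) (0, 1) = (F'' (t, r) (0, 1)) (1, 0) := by
    intro t r
    exact second_derivative_symmetric
      (fun y => ((hsm.differentiable (by simp)) y).hasFDerivAt)
      (((hF'sm.differentiable (by simp)) (t, r)).hasFDerivAt) _ _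
  -- hence for r > 0, Ψ(t,·) has derivative D t r
  have stepDE : ∀ t : ℝ, ∀ r ∈ Ioi (0:ℝ), HasDerivAt (fun r' => Ψ (t, r')) (D t r) r := by
    intro t r hr
    have := stepD t r hr
    rwa [← hsymm, ← stepC t r hr] at this
  -- Step F : integrability of D t · on Ioi 0 and vanishing of its integral
  have hDint : ∀ t : ℝ, IntegrableOn (fun r => D t r) (Ioi 0) := by
    intro t
    obtain ⟨g, hgint, hgbd⟩ := hdom t t
    apply Integrable.mono' hgint ((hDcont t).aestronglyMeasurable)
    filter_upwards [ae_restrict_mem measurableSet_Ioi] with r hr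
    rw [Real.norm_eq_abs]
    exact hgbd t (by simp) r (le_of_lt hr)
  have hFzero : ∀ t : ℝ, (∫ r in Ioi (0:ℝ), D t r) = 0 := by
    intro t
    have hcont : ContinuousWithinAt (fun r' => Ψ (t, r')) (Ici 0) 0 :=
      ((hΨsm.continuous.comp (continuous_const.prodMk continuous_id)).continuousAt
        ).continuousWithinAt
    have := integral_Ioi_of_hasDerivAt_of_tendsto hcont (stepDE t) (hDint t) (hdecay t)
    simpa [hΨ_def] using this
  -- Step G : the energy has zero derivative everywhere
  set En : ℝ → ℝ := fun t => ∫ r in Ioi (0:ℝ), Φ (t, r) with hEn_def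
  have hEderiv : ∀ t₀ : ℝ, HasDerivAt En 0 t₀ := by
    intro t₀
    obtain ⟨g, hgint, hgbd⟩ := hdom (t₀ - 1) (t₀ + 1)
    have key := hasDerivAt_integral_of_dominated_loc_of_deriv_le
      (F := fun t r => Φ (t, r)) (F' := fun t r => D t r)
      (μ := volume.restrict (Ioi (0:ℝ))) (x₀ := t₀) (bound := g)
      (Metric.ball_mem_nhds t₀ one_pos)
      (Filter.Eventually.of_forall fun t =>
        (hΦsm.continuous.comp (continuous_const.prodMk continuous_id)).aestronglyMeasurable)
      (hint t₀)
      ((hDcont t₀).aestronglyMeasurable)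
      (by
        filter_upwards [ae_restrict_mem measurableSet_Ioi] with r hr
        intro x hx
        rw [Real.norm_eq_abs]
        have hx1 : |x - t₀| < 1 := by
          simpa [Real.norm_eq_abs] using mem_ball_iff_norm.mp hx
        have hx' : x ∈ Icc (t₀ - 1) (t₀ + 1) := by
          rcases abs_lt.mp hx1 with ⟨h1, h2⟩
          exact ⟨by linarith, by linarith⟩
        exact hgbd x hx' r (le_of_lt hr))
      hgint
      (by
        filter_upwards [ae_restrict_mem measurableSet_Ioi] with r _
        intro x _
        have := hDΦ x r
        rwa [← hDval x r] at this)
    have := key.2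
    rw [hFzero t₀] at this
    exact this
  -- conclude constant
  have hconst : ∀ t s : ℝ, En t = En s := by
    intro t s
    exact is_const_of_deriv_eq_zero (fun x => (hEderiv x).differentiableAt)
      (fun x => (hEderiv x).deriv) t s
  intro t s
  have hre : ∀ u : ℝ, (∫ r in Ioi (0:ℝ), ee u r * r * Real.exp (β u r)) = En u := by
    intro u
    rw [hEn_def]
    congr 1
    funext r
    simp only [hΦ_def]
    ring
  rw [hre t, hre s, hconst t s]
end

section
/- Let β : ℝ × [0,∞) → ℝ be smooth with β(t,0) = 0 for all t, let 𝐞 : ℝ × [0,∞) → [0,∞) be smooth and nonnegative, and assume ∂_r(e^{−β(t,r)}) = −r e^{β(t,r)} 𝐞(t,r) everywhere. Define E(t,r) := 2π ∫_0^r 𝐞(t,ξ) ξ e^{β(t,ξ)} dξ, and assume there is a constant E₀ with 0 ≤ E(t,r) ≤ E₀ < 2π for all (t,r). Then for all (t,r): (a) e^{β(t,r)} = (1 − E(t,r)/(2π))^{−1}; (b) r ↦ β(t,r) is nondecreasing; (c) 0 ≤ β(t,r) ≤ −ln(1 − E₀/(2π)). -/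
open Real MeasureTheory Set

/-- β-part of Proposition 3.2: with the normalisation `β(t,0)=0`, a nonnegative
energy density `𝐞`, the 00-constraint `∂_r(e^{−β}) = −r e^{β}𝐞`, and the uniform energy bound
`0 ≤ E(t,r) ≤ E₀ < 2π`, one has (a) `e^{β} = (1 − E/(2π))⁻¹`, (b) `r ↦ β(t,r)` nondecreasing,
(c) `0 ≤ β ≤ −ln(1 − E₀/(2π))`. -/
theorem beta_uniform_bounds
    (β ee E : ℝ → ℝ → ℝ) (E₀ : ℝ)
    (hβs : ContDiff ℝ (⊤ : ℕ∞) (fun p : ℝ × ℝ => β p.1 p.2))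
    (hees : ContDiff ℝ (⊤ : ℕ∞) (fun p : ℝ × ℝ => ee p.1 p.2))
    (hee_nonneg : ∀ t r : ℝ, 0 ≤ r → 0 ≤ ee t r)
    (haxis : ∀ t : ℝ, β t 0 = 0)
    (hconstr : ∀ t r : ℝ, 0 ≤ r →
      deriv (fun r' => Real.exp (-β t r')) r = -(r * Real.exp (β t r) * ee t r))
    (hE : ∀ t r : ℝ, E t r = 2 * π * ∫ ξ in (0:ℝ)..r, ee t ξ * ξ * Real.exp (β t ξ))
    (hEbd : ∀ t r : ℝ, 0 ≤ r → 0 ≤ E t r ∧ E t r ≤ E₀)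
    (hE₀ : E₀ < 2 * π) :
    ∀ t : ℝ,
      (∀ r : ℝ, 0 ≤ r → Real.exp (β t r) = (1 - E t r / (2 * π))⁻¹) ∧
      MonotoneOn (fun r => β t r) (Ici 0) ∧
      (∀ r : ℝ, 0 ≤ r → 0 ≤ β t r ∧ β t r ≤ -Real.log (1 - E₀ / (2 * π))) := by
  intro t
  have hπ : (0:ℝ) < 2 * π := by positivity
  -- smoothness of the slices
  have hβt : ContDiff ℝ (⊤ : ℕ∞) (fun r' : ℝ => β t r') :=
    hβs.comp (contDiff_const.prodMk contDiff_id)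
  have heet : Continuous (fun r' : ℝ => ee t r') :=
    (hees.comp (contDiff_const.prodMk contDiff_id)).continuous
  have hfc : ContDiff ℝ (⊤ : ℕ∞) (fun r' : ℝ => Real.exp (-β t r')) :=
    Real.contDiff_exp.comp hβt.neg
  have hcont : Continuous (fun x : ℝ => ee t x * x * Real.exp (β t x)) := by
    exact (heet.mul continuous_id).mul (Real.continuous_exp.comp hβt.continuous)
  have hint : ∀ a b : ℝ, IntervalIntegrable
      (fun x : ℝ => ee t x * x * Real.exp (β t x)) volume a b :=
    fun a b => hcont.intervalIntegrable a b
  -- the key identity : exp(-β) = 1 - E/(2π)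
  have key : ∀ r : ℝ, 0 ≤ r → Real.exp (-β t r) = 1 - E t r / (2 * π) := by
    intro r hr
    have hd : ∀ x ∈ uIcc (0:ℝ) r, HasDerivAt (fun r' => Real.exp (-β t r'))
        (-(ee t x * x * Real.exp (β t x))) x := by
      intro x hx
      have hx0 : 0 ≤ x := by
        rw [uIcc_of_le hr] at hx; exact hx.1
      have hdx : DifferentiableAt ℝ (fun r' => Real.exp (-β t r')) x :=
        (hfc.differentiable (by simp)) x
      have := hdx.hasDerivAt
      rw [hconstr t x hx0] at this
      rw [show -(ee t x * x * Real.exp (β t x)) = -(x * Real.exp (β t x) * ee t x) by ring]; exact this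
    have hftc := intervalIntegral.integral_eq_sub_of_hasDerivAt hd
      ((hint 0 r).neg)
    rw [intervalIntegral.integral_neg] at hftc
    have hE' : E t r = 2 * π * ∫ ξ in (0:ℝ)..r, ee t ξ * ξ * Real.exp (β t ξ) := hE t r
    have h0 : β t 0 = 0 := haxis t
    have : -(E t r / (2 * π)) = Real.exp (-β t r) - Real.exp (-β t 0) := by
      rw [hE']
      field_simp
      linarith [hftc]
    rw [h0, neg_zero, Real.exp_zero] at this
    linarith
  have hEpos : ∀ r : ℝ, 0 ≤ r → 0 < 1 - E t r / (2 * π) := by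
    intro r hr
    rw [← key r hr]; exact Real.exp_pos _
  have ha : ∀ r : ℝ, 0 ≤ r → Real.exp (β t r) = (1 - E t r / (2 * π))⁻¹ := by
    intro r hr
    rw [← key r hr, ← Real.exp_neg, neg_neg]
  -- E is monotone on [0,∞)
  have hEmono : ∀ r₁ r₂ : ℝ, 0 ≤ r₁ → r₁ ≤ r₂ → E t r₁ ≤ E t r₂ := by
    intro r₁ r₂ h1 h12
    have hadj := intervalIntegral.integral_add_adjacent_intervals
      (hint 0 r₁) (hint r₁ r₂)
    have hnn : (0:ℝ) ≤ ∫ x in r₁..r₂, ee t x * x * Real.exp (β t x) := by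
      apply intervalIntegral.integral_nonneg h12
      intro x hx
      have hx0 : 0 ≤ x := le_trans h1 hx.1
      have := hee_nonneg t x hx0
      positivity
    rw [hE t r₁, hE t r₂, ← hadj]
    nlinarith
  refine ⟨ha, ?_, ?_⟩
  · intro r₁ h1 r₂ h2 h12
    simp only [mem_Ici] at h1 h2
    have hle : Real.exp (-β t r₂) ≤ Real.exp (-β t r₁) := by
      rw [key r₁ h1, key r₂ h2]
      have := hEmono r₁ r₂ h1 h12
      have := hπ
      gcongr
    simpa using Real.exp_le_exp.mp hle
  · intro r hr
    obtain ⟨hE0, hEE0⟩ := hEbd t r hr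
    constructor
    · have : Real.exp (-β t r) ≤ 1 := by
        rw [key r hr]
        have : 0 ≤ E t r / (2 * π) := by positivity
        linarith
      have := Real.exp_le_exp.mp (by simpa using this : Real.exp (-β t r) ≤ Real.exp 0)
      linarith
    · have hpos : 0 < 1 - E₀ / (2 * π) := by
        rw [sub_pos, div_lt_one hπ]; exact hE₀
      rw [le_neg]
      rw [Real.log_le_iff_le_exp hpos, key r hr]
      have : E t r / (2 * π) ≤ E₀ / (2 * π) := by gcongr
      linarith
end

section
/- Let α, β : ℝ × [0,∞) → ℝ and 𝐞, 𝐟 : ℝ × [0,∞) → ℝ be smooth, with α(t,0) = 0 for all t, 0 ≤ 𝐟 ≤ 2𝐞 pointwise, 0 ≤ β ≤ β_∞ pointwise for a constant β_∞, and ∂_r α(t,r) = r e^{2β(t,r)} (𝐞(t,r) − 𝐟(t,r)) everywhere. Assume moreover 2π ∫_0^∞ 𝐞(t,ξ) ξ e^{β(t,ξ)} dξ ≤ E₀ for all t. Then |α(t,r)| ≤ e^{β_∞} E₀ / π for all (t,r). -/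
open Real MeasureTheory Set

/-- α-part of Proposition 3.2: with `α(t,0)=0`, `0 ≤ 𝐟 ≤ 2𝐞`, `0 ≤ β ≤ β_∞`,
the 11-Einstein equation `α_r = r e^{2β}(𝐞 − 𝐟)` and the conserved energy bound
`2π ∫₀^∞ 𝐞 ξ e^{β} dξ ≤ E₀`, one gets `|α(t,r)| ≤ e^{β_∞} E₀ / π`. -/
theorem alpha_uniform_bound
    (α β ee ff : ℝ → ℝ → ℝ) (βinf E₀ : ℝ)
    (hαs : ContDiff ℝ (⊤ : ℕ∞) (fun p : ℝ × ℝ => α p.1 p.2))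
    (hβs : ContDiff ℝ (⊤ : ℕ∞) (fun p : ℝ × ℝ => β p.1 p.2))
    (hees : ContDiff ℝ (⊤ : ℕ∞) (fun p : ℝ × ℝ => ee p.1 p.2))
    (hffs : ContDiff ℝ (⊤ : ℕ∞) (fun p : ℝ × ℝ => ff p.1 p.2))
    (hα0 : ∀ t : ℝ, α t 0 = 0)
    (hff : ∀ t r : ℝ, 0 ≤ r → 0 ≤ ff t r ∧ ff t r ≤ 2 * ee t r)
    (hβbd : ∀ t r : ℝ, 0 ≤ r → 0 ≤ β t r ∧ β t r ≤ βinf)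
    (heq : ∀ t r : ℝ, 0 ≤ r →
      deriv (fun r' => α t r') r = r * Real.exp (2 * β t r) * (ee t r - ff t r))
    (hintegrable : ∀ t : ℝ,
      IntegrableOn (fun ξ => ee t ξ * ξ * Real.exp (β t ξ)) (Ioi 0))
    (hEbd : ∀ t : ℝ, 2 * π * ∫ ξ in Ioi (0:ℝ), ee t ξ * ξ * Real.exp (β t ξ) ≤ E₀) :
    ∀ t r : ℝ, 0 ≤ r → |α t r| ≤ Real.exp βinf * E₀ / π := by
  intro t r hr
  have hπ : (0:ℝ) < π := Real.pi_pos
  have hFc : ContDiff ℝ (⊤ : ℕ∞) (fun r' => α t r') :=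
    hαs.comp (contDiff_const.prodMk contDiff_id)
  have hFd : Differentiable ℝ (fun r' => α t r') := hFc.differentiable (by simp)
  have hFdc : Continuous (deriv (fun r' => α t r')) := hFc.continuous_deriv (by simp)
  have Cβ : Continuous (fun x => β t x) := hβs.continuous.comp (Continuous.prodMk_right t)
  have Ce : Continuous (fun x => ee t x) := hees.continuous.comp (Continuous.prodMk_right t)
  have hg : Continuous (fun x => ee t x * x * Real.exp (β t x)) :=
    (Ce.mul continuous_id).mul (Real.continuous_exp.comp Cβ)
  -- FTC
  have hFTC : α t r = ∫ x in (0:ℝ)..r, deriv (fun r' => α t r') x := by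
    rw [intervalIntegral.integral_deriv_eq_sub (fun x _ => hFd x)
      (hFdc.intervalIntegrable _ _)]
    simp [hα0]
  -- pointwise bound
  have hpt : ∀ x ∈ Icc (0:ℝ) r,
      |deriv (fun r' => α t r') x| ≤ Real.exp βinf * (ee t x * x * Real.exp (β t x)) := by
    intro x hx
    obtain ⟨hx0, _⟩ := hx
    obtain ⟨hf0, hf2⟩ := hff t x hx0
    obtain ⟨hβ0, hβ1⟩ := hβbd t x hx0
    have he0 : 0 ≤ ee t x := by linarith
    have habs : |ee t x - ff t x| ≤ ee t x := abs_le.2 ⟨by linarith, by linarith⟩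
    rw [heq t x hx0, abs_mul, abs_mul, abs_of_nonneg hx0,
      abs_of_pos (Real.exp_pos _)]
    have hexp : Real.exp (2 * β t x) ≤ Real.exp βinf * Real.exp (β t x) := by
      rw [← Real.exp_add]; exact Real.exp_le_exp.2 (by linarith)
    calc x * Real.exp (2 * β t x) * |ee t x - ff t x|
        ≤ x * (Real.exp βinf * Real.exp (β t x)) * ee t x := by
          apply mul_le_mul (mul_le_mul_of_nonneg_left hexp hx0) habs (abs_nonneg _)
            (by positivity)
      _ = Real.exp βinf * (ee t x * x * Real.exp (β t x)) := by ring
  -- integral bound over [0, r]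
  have h1 : |α t r| ≤
      Real.exp βinf * ∫ x in (0:ℝ)..r, ee t x * x * Real.exp (β t x) := by
    rw [hFTC]
    calc |∫ x in (0:ℝ)..r, deriv (fun r' => α t r') x|
        ≤ ∫ x in (0:ℝ)..r, |deriv (fun r' => α t r') x| :=
          intervalIntegral.abs_integral_le_integral_abs hr
      _ ≤ ∫ x in (0:ℝ)..r, Real.exp βinf * (ee t x * x * Real.exp (β t x)) := by
          apply intervalIntegral.integral_mono_on hr
            (hFdc.abs.intervalIntegrable _ _)
            ((hg.const_smul (Real.exp βinf)).intervalIntegrable _ _)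
          exact hpt
      _ = Real.exp βinf * ∫ x in (0:ℝ)..r, ee t x * x * Real.exp (β t x) := by
          rw [← intervalIntegral.integral_const_mul]
  -- extend the integral to Ioi 0
  have hnn : 0 ≤ᵐ[volume.restrict (Ioi (0:ℝ))]
      fun x => ee t x * x * Real.exp (β t x) := by
    rw [Filter.EventuallyLE, ae_restrict_iff' measurableSet_Ioi]
    filter_upwards with x hx
    obtain ⟨hf0, hf2⟩ := hff t x hx.le
    have he0 : 0 ≤ ee t x := by linarith
    show (0:ℝ) ≤ ee t x * x * Real.exp (β t x)
    exact mul_nonneg (mul_nonneg he0 (le_of_lt hx)) (Real.exp_pos _).le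
  have h2 : (∫ x in (0:ℝ)..r, ee t x * x * Real.exp (β t x)) ≤
      ∫ ξ in Ioi (0:ℝ), ee t ξ * ξ * Real.exp (β t ξ) := by
    rw [intervalIntegral.integral_of_le hr]
    exact setIntegral_mono_set (hintegrable t) hnn
      (HasSubset.Subset.eventuallyLE Ioc_subset_Ioi_self)
  have hInn : 0 ≤ ∫ ξ in Ioi (0:ℝ), ee t ξ * ξ * Real.exp (β t ξ) :=
    integral_nonneg_of_ae hnn
  have hE0 : 0 ≤ E₀ := le_trans (by positivity) (hEbd t)
  have hI : (∫ ξ in Ioi (0:ℝ), ee t ξ * ξ * Real.exp (β t ξ)) ≤ E₀ / (2 * π) := by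
    rw [le_div_iff₀ (by positivity)]
    linarith [hEbd t]
  have hexpnn : (0:ℝ) < Real.exp βinf := Real.exp_pos _
  calc |α t r| ≤ Real.exp βinf * ∫ x in (0:ℝ)..r, ee t x * x * Real.exp (β t x) := h1
    _ ≤ Real.exp βinf * (E₀ / (2 * π)) := by
        apply mul_le_mul_of_nonneg_left (le_trans h2 hI) hexpnn.le
    _ ≤ Real.exp βinf * E₀ / π := by
        rw [mul_div_assoc]
        apply mul_le_mul_of_nonneg_left _ hexpnn.le
        apply div_le_div_of_nonneg_left hE0 hπ (by linarith)
end

section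
/- Let α, β, 𝐞, 𝐦 : ℝ × [0,∞) → ℝ be smooth with ∂_t( r e^{β} 𝐞 ) = ∂_r( r e^{α} 𝐦 ) and 𝐞 ≥ |𝐦| everywhere. Let t_O > 0 and let ρ : [0, t_O] → [0,∞) be C¹ with ρ(t_O) = 0 and ρ'(t) = −e^{α(t,ρ(t)) − β(t,ρ(t))} for all t (the ingoing null generator of the backward light cone of the axis point O). Define the cone energy E^O(t) := 2π ∫_0^{ρ(t)} 𝐞(t,ξ) ξ e^{β(t,ξ)} dξ. Then E^O is nonincreasing on [0, t_O]: E^O(τ) ≥ E^O(s) whenever 0 ≤ τ ≤ s ≤ t_O. -/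
open Real Set

open intervalIntegral MeasureTheory Asymptotics Filter Topology in
/-- Leibniz rule for an integral with a moving upper boundary and smooth integrand. -/
lemma moving_integral_hasDerivAt
    (f : ℝ → ℝ → ℝ) (hf : ContDiff ℝ (⊤ : ℕ∞) (fun p : ℝ × ℝ => f p.1 p.2))
    (ρ : ℝ → ℝ) (t₀ ρ' : ℝ) (hρ : HasDerivAt ρ ρ' t₀) :
    HasDerivAt (fun t => ∫ ξ in (0:ℝ)..ρ t, f t ξ)
      (f t₀ (ρ t₀) * ρ' + ∫ ξ in (0:ℝ)..ρ t₀, deriv (fun t' => f t' ξ) t₀) t₀ := by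
  set F : ℝ × ℝ → ℝ := fun p => f p.1 p.2 with hF
  have hFc : Continuous F := hf.continuous
  have hfc : ∀ t, Continuous (f t) := fun t =>
    hFc.comp (continuous_const.prodMk continuous_id)
  set y₀ : ℝ := ρ t₀ with hy₀
  set F' : ℝ → ℝ := fun ξ => fderiv ℝ F (t₀, ξ) (1, 0) with hF'
  have hF'at : ∀ ξ : ℝ, HasDerivAt (fun t => f t ξ) (F' ξ) t₀ := by
    intro ξ
    have h1 : HasFDerivAt F (fderiv ℝ F (t₀, ξ)) (t₀, ξ) :=
      (hf.differentiable (by simp) (t₀, ξ)).hasFDerivAt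
    have h2 : HasDerivAt (fun t : ℝ => (t, ξ)) ((1 : ℝ), (0 : ℝ)) t₀ :=
      (hasDerivAt_id t₀).prodMk (hasDerivAt_const t₀ ξ)
    exact h1.comp_hasDerivAt t₀ h2
  have hF'cont : Continuous F' := by
    have h1 : Continuous fun ξ : ℝ => fderiv ℝ F (t₀, ξ) :=
      (hf.continuous_fderiv (by simp)).comp (continuous_const.prodMk continuous_id)
    exact h1.clm_apply continuous_const
  -- a compact convex box on which we get a Lipschitz bound
  set b : ℝ := |y₀| + 2 with hbdef
  have hy₀b : y₀ ∈ Icc (-b) b := by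
    rw [hbdef]; constructor <;> [linarith [neg_abs_le y₀]; linarith [le_abs_self y₀]]
  have h0b : (0:ℝ) ∈ Icc (-b) b := by
    rw [hbdef]; constructor <;> linarith [abs_nonneg y₀]
  set S : Set (ℝ × ℝ) := Icc (t₀ - 1) (t₀ + 1) ×ˢ Icc (-b) b with hSdef
  obtain ⟨C, hC⟩ : ∃ C, ∀ p ∈ S, ‖fderiv ℝ F p‖ ≤ C :=
    ((isCompact_Icc.prod isCompact_Icc).exists_bound_of_continuousOn
      ((hf.continuous_fderiv (by simp)).continuousOn))
  have hC0 : 0 ≤ C := by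
    have hmem : ((t₀, 0) : ℝ × ℝ) ∈ S :=
      ⟨⟨by linarith, by linarith⟩, h0b⟩
    exact le_trans (norm_nonneg _) (hC _ hmem)
  set K : NNReal := Real.toNNReal C with hKdef
  have hKC : (K : ℝ) = C := Real.coe_toNNReal _ hC0
  have hKlip : LipschitzOnWith K F S := by
    apply ((convex_Icc _ _).prod (convex_Icc _ _)).lipschitzOnWith_of_nnnorm_fderiv_le
      (fun p _ => (hf.differentiable (by simp)).differentiableAt)
    intro p hp
    rw [← NNReal.coe_le_coe, coe_nnnorm, hKC]
    exact hC p hp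
  have hball : Metric.ball t₀ 1 ⊆ Icc (t₀ - 1) (t₀ + 1) := by
    intro t ht
    rw [Metric.mem_ball, Real.dist_eq, abs_sub_lt_iff] at ht
    constructor <;> linarith [ht.1, ht.2]
  have hptlip : ∀ t t' ξ : ℝ, t ∈ Icc (t₀ - 1) (t₀ + 1) → t' ∈ Icc (t₀ - 1) (t₀ + 1) →
      ξ ∈ Icc (-b) b → |f t ξ - f t' ξ| ≤ (K : ℝ) * |t - t'| := by
    intro t t' ξ ht ht' hξ
    have := hKlip.dist_le_mul (t, ξ) ⟨ht, hξ⟩ (t', ξ) ⟨ht', hξ⟩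
    simpa [F, Prod.dist_eq, Real.dist_eq, abs_nonneg, max_eq_left] using this
  have ht₀mem : t₀ ∈ Icc (t₀ - 1) (t₀ + 1) := by constructor <;> linarith
  -- Part A : frozen-time integral with a moving endpoint
  have hA : HasDerivAt (fun t => ∫ ξ in (0:ℝ)..ρ t, f t₀ ξ) (f t₀ y₀ * ρ') t₀ := by
    have hg : HasDerivAt (fun y => ∫ ξ in (0:ℝ)..y, f t₀ ξ) (f t₀ y₀) y₀ :=
      ((hfc t₀).integral_hasStrictDerivAt 0 y₀).hasDerivAt
    exact hg.comp t₀ hρ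
  -- Part C : moving time, frozen endpoint (differentiation under the integral)
  have hIsub : Set.uIoc (0:ℝ) y₀ ⊆ Icc (-b) b :=
    uIoc_subset_uIcc.trans (uIcc_subset_Icc h0b hy₀b)
  have hC' : HasDerivAt (fun t => ∫ ξ in (0:ℝ)..y₀, f t ξ)
      (∫ ξ in (0:ℝ)..y₀, F' ξ) t₀ := by
    have h := intervalIntegral.hasDerivAt_integral_of_dominated_loc_of_lip
      (F := fun t ξ => f t ξ) (F' := F') (x₀ := t₀) (a := (0:ℝ)) (b := y₀)
      (bound := fun _ => (K:ℝ)) (s := Metric.ball t₀ 1) (Metric.ball_mem_nhds t₀ one_pos)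
      (Filter.Eventually.of_forall fun t => ((hfc t).aestronglyMeasurable).restrict)
      ((hfc t₀).intervalIntegrable _ _)
      ((Continuous.aestronglyMeasurable hF'cont (μ := MeasureTheory.volume)).restrict)
      (Filter.Eventually.of_forall ?_)
      intervalIntegrable_const
      (Filter.Eventually.of_forall fun ξ _ => hF'at ξ)
    · exact h.2
    · intro ξ hξ
      have hnn : Real.nnabs ((K : ℝ)) = K := by
        ext
        rw [Real.coe_nnabs]
        exact abs_of_nonneg K.2
      rw [hnn]
      intro t ht t' ht'
      have h1 := hptlip t t' ξ (hball ht) (hball ht') (hIsub hξ)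
      rw [edist_dist, edist_dist, Real.dist_eq, Real.dist_eq]
      calc ENNReal.ofReal (|f t ξ - f t' ξ|) ≤ ENNReal.ofReal ((K:ℝ) * |t - t'|) :=
            ENNReal.ofReal_le_ofReal h1
        _ = (K : ENNReal) * ENNReal.ofReal (|t - t'|) := by
            rw [ENNReal.ofReal_mul (by positivity)]
            congr 1
            simp [ENNReal.ofReal_coe_nnreal]
  -- Part D : error term has derivative zero
  set D : ℝ → ℝ := fun t => ∫ ξ in y₀..ρ t, (f t ξ - f t₀ ξ) with hDdef
  have hD : HasDerivAt D 0 t₀ := by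
    obtain ⟨M, hM0, hMb⟩ := (hρ.isBigO_sub).exists_nonneg
    have hMb' : ∀ᶠ t in 𝓝 t₀, ‖ρ t - y₀‖ ≤ M * ‖t - t₀‖ := by
      have := hMb.bound
      simpa using this
    have hδpos : (0:ℝ) < min 1 (2 / (M + 1)) := by positivity
    have hev : ∀ᶠ t in 𝓝 t₀, dist t t₀ < min 1 (2 / (M + 1)) :=
      Filter.eventually_of_mem (Metric.ball_mem_nhds t₀ hδpos) fun t ht => ht
    have hbig : D =O[𝓝 t₀] fun t => (t - t₀) * (t - t₀) := by
      apply Asymptotics.IsBigO.of_bound ((K:ℝ) * M)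
      filter_upwards [hMb', hev] with t hMt hdt
      rw [Real.dist_eq] at hdt
      have hdt1 : |t - t₀| < 1 := lt_of_lt_of_le hdt (min_le_left _ _)
      have hdt2 : |t - t₀| < 2 / (M + 1) := lt_of_lt_of_le hdt (min_le_right _ _)
      have hMt' : |ρ t - y₀| ≤ M * |t - t₀| := by simpa [Real.norm_eq_abs] using hMt
      have hρtb : ρ t ∈ Icc (-b) b := by
        have hM1 : (0:ℝ) < M + 1 := by linarith
        have h2 : M * (2 / (M + 1)) ≤ 2 := by
          rw [mul_div_assoc', div_le_iff₀ hM1]; nlinarith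
        have h1 : M * |t - t₀| ≤ 2 :=
          le_trans (mul_le_mul_of_nonneg_left (le_of_lt hdt2) hM0) h2
        have h3 : |ρ t| ≤ |y₀| + 2 := by
          have := abs_sub_abs_le_abs_sub (ρ t) y₀
          linarith
        rw [hbdef]
        constructor
        · linarith [neg_abs_le (ρ t)]
        · linarith [le_abs_self (ρ t)]
      have htmem : t ∈ Icc (t₀ - 1) (t₀ + 1) := by
        rw [abs_sub_lt_iff] at hdt1
        constructor <;> linarith [hdt1.1, hdt1.2]
      have hIsub2 : Set.uIoc y₀ (ρ t) ⊆ Icc (-b) b :=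
        uIoc_subset_uIcc.trans (uIcc_subset_Icc hy₀b hρtb)
      have hbound : ∀ ξ ∈ Set.uIoc y₀ (ρ t), ‖f t ξ - f t₀ ξ‖ ≤ (K:ℝ) * |t - t₀| := by
        intro ξ hξ
        simpa [Real.norm_eq_abs] using hptlip t t₀ ξ htmem ht₀mem (hIsub2 hξ)
      have h4 : ‖D t‖ ≤ (K:ℝ) * |t - t₀| * |ρ t - y₀| :=
        intervalIntegral.norm_integral_le_of_norm_le_const hbound
      calc ‖D t‖ ≤ (K:ℝ) * |t - t₀| * |ρ t - y₀| := h4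
        _ ≤ (K:ℝ) * |t - t₀| * (M * |t - t₀|) := by
            apply mul_le_mul_of_nonneg_left hMt' (by positivity)
        _ = (K:ℝ) * M * ‖(t - t₀) * (t - t₀)‖ := by
            rw [Real.norm_eq_abs, abs_mul]; ring
    have hsmall : (fun t : ℝ => (t - t₀) * (t - t₀)) =o[𝓝 t₀] fun t => t - t₀ := by
      have h1 : (fun t : ℝ => t - t₀) =o[𝓝 t₀] (fun _ => (1:ℝ)) := by
        rw [Asymptotics.isLittleO_one_iff]
        have : Filter.Tendsto (fun t : ℝ => t - t₀) (𝓝 t₀) (𝓝 (t₀ - t₀)) :=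
          (continuous_id.sub continuous_const).tendsto t₀
        simpa using this
      have := h1.mul_isBigO (Asymptotics.isBigO_refl (fun t : ℝ => t - t₀) (𝓝 t₀))
      simpa using this
    rw [hasDerivAt_iff_isLittleO]
    have hD0 : D t₀ = 0 := by simp [hDdef, ← hy₀]
    simpa [hD0] using hbig.trans_isLittleO hsmall
  -- Combine the three parts
  set c : ℝ := ∫ ξ in (0:ℝ)..y₀, f t₀ ξ with hcdef
  have hsum := ((hA.add hC').add hD).sub_const c
  have hfun : (fun t => ((∫ ξ in (0:ℝ)..ρ t, f t₀ ξ) + ∫ ξ in (0:ℝ)..y₀, f t ξ) + D t - c)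
      = fun t => ∫ ξ in (0:ℝ)..ρ t, f t ξ := by
    funext t
    have i1 : IntervalIntegrable (f t₀) volume 0 y₀ := (hfc t₀).intervalIntegrable _ _
    have i2 : IntervalIntegrable (f t₀) volume y₀ (ρ t) := (hfc t₀).intervalIntegrable _ _
    have i3 : IntervalIntegrable (f t) volume 0 y₀ := (hfc t).intervalIntegrable _ _
    have i4 : IntervalIntegrable (f t) volume y₀ (ρ t) := (hfc t).intervalIntegrable _ _
    have e1 : (∫ ξ in (0:ℝ)..ρ t, f t₀ ξ)
        = (∫ ξ in (0:ℝ)..y₀, f t₀ ξ) + ∫ ξ in y₀..ρ t, f t₀ ξ :=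
      (intervalIntegral.integral_add_adjacent_intervals i1 i2).symm
    have e2 : (∫ ξ in (0:ℝ)..ρ t, f t ξ)
        = (∫ ξ in (0:ℝ)..y₀, f t ξ) + ∫ ξ in y₀..ρ t, f t ξ :=
      (intervalIntegral.integral_add_adjacent_intervals i3 i4).symm
    have e3 : D t = (∫ ξ in y₀..ρ t, f t ξ) - ∫ ξ in y₀..ρ t, f t₀ ξ :=
      intervalIntegral.integral_sub i4 i2
    rw [e1, e2, e3, hcdef]
    ring
  simp only [Pi.add_apply] at hsum
  rw [hfun] at hsum
  have hval : (f t₀ y₀ * ρ' + (∫ ξ in (0:ℝ)..y₀, F' ξ)) + 0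
      = f t₀ y₀ * ρ' + ∫ ξ in (0:ℝ)..y₀, deriv (fun t' => f t' ξ) t₀ := by
    have : ∀ ξ : ℝ, F' ξ = deriv (fun t' => f t' ξ) t₀ := fun ξ => ((hF'at ξ).deriv).symm
    simp only [this]
    ring
  rw [hval] at hsum
  exact hsum

/-- Proposition 3.3, monotonicity of the cone energy: if the conservation law
`∂_t(r e^{β}𝐞) = ∂_r(r e^{α}𝐦)` and the dominant energy condition `𝐞 ≥ |𝐦|` hold, and
`ρ` is the ingoing null generator of the backward light cone of the axis point `O`
(`ρ' = −e^{α−β}`, `ρ(t_O) = 0`), then the cone energy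
`E^O(t) = 2π ∫₀^{ρ(t)} 𝐞(t,ξ) ξ e^{β(t,ξ)} dξ` is nonincreasing on `[0, t_O]`. -/
theorem cone_energy_monotone
    (α β ee mm : ℝ → ℝ → ℝ) (t_O : ℝ) (ρ : ℝ → ℝ)
    (hα : ContDiff ℝ (⊤ : ℕ∞) (fun p : ℝ × ℝ => α p.1 p.2))
    (hβ : ContDiff ℝ (⊤ : ℕ∞) (fun p : ℝ × ℝ => β p.1 p.2))
    (hee : ContDiff ℝ (⊤ : ℕ∞) (fun p : ℝ × ℝ => ee p.1 p.2))
    (hmm : ContDiff ℝ (⊤ : ℕ∞) (fun p : ℝ × ℝ => mm p.1 p.2))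
    (hcons : ∀ t r : ℝ, 0 ≤ r →
      deriv (fun t' => r * Real.exp (β t' r) * ee t' r) t
        = deriv (fun r' => r' * Real.exp (α t r') * mm t r') r)
    (hdomE : ∀ t r : ℝ, 0 ≤ r → |mm t r| ≤ ee t r)
    (ht_O : 0 < t_O)
    (hρC1 : ∀ t ∈ Icc (0:ℝ) t_O,
      HasDerivAt ρ (-Real.exp (α t (ρ t) - β t (ρ t))) t)
    (hρ_nonneg : ∀ t ∈ Icc (0:ℝ) t_O, 0 ≤ ρ t)
    (hρ_end : ρ t_O = 0) :
    ∀ τ s : ℝ, 0 ≤ τ → τ ≤ s → s ≤ t_O →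
      2 * π * ∫ ξ in (0:ℝ)..(ρ s), ee s ξ * ξ * Real.exp (β s ξ)
        ≤ 2 * π * ∫ ξ in (0:ℝ)..(ρ τ), ee τ ξ * ξ * Real.exp (β τ ξ) := by
  intro τ s hτ0 hτs hst
  set f : ℝ → ℝ → ℝ := fun t ξ => ee t ξ * ξ * Real.exp (β t ξ) with hfdef
  have hfC : ContDiff ℝ (⊤ : ℕ∞) (fun p : ℝ × ℝ => f p.1 p.2) :=
    (hee.mul contDiff_snd).mul hβ.exp
  set Φ : ℝ → ℝ := fun t => ∫ ξ in (0:ℝ)..ρ t, f t ξ with hΦdef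
  -- derivative of the cone energy at each time in `[0, t_O]`
  have hΦder : ∀ t₀ ∈ Icc (0:ℝ) t_O, HasDerivAt Φ
      (ρ t₀ * Real.exp (α t₀ (ρ t₀)) * (mm t₀ (ρ t₀) - ee t₀ (ρ t₀))) t₀ := by
    intro t₀ ht₀
    have hder := moving_integral_hasDerivAt f hfC ρ t₀ _ (hρC1 t₀ ht₀)
    have hy0 : 0 ≤ ρ t₀ := hρ_nonneg t₀ ht₀
    set y₀ : ℝ := ρ t₀ with hy₀def
    -- rewrite the interior integral using the conservation law and FTC
    set g : ℝ → ℝ := fun r' => r' * Real.exp (α t₀ r') * mm t₀ r' with hgdef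
    have hg1 : ContDiff ℝ (⊤ : ℕ∞) (fun r : ℝ => α t₀ r) :=
      hα.comp (contDiff_const.prodMk contDiff_id)
    have hgm : ContDiff ℝ (⊤ : ℕ∞) (fun r : ℝ => mm t₀ r) :=
      hmm.comp (contDiff_const.prodMk contDiff_id)
    have hg : ContDiff ℝ (⊤ : ℕ∞) g := (contDiff_id.mul hg1.exp).mul hgm
    have hicongr : (∫ ξ in (0:ℝ)..y₀, deriv (fun t' => f t' ξ) t₀)
        = ∫ ξ in (0:ℝ)..y₀, deriv g ξ := by
      apply intervalIntegral.integral_congr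
      intro ξ hξ
      rw [uIcc_of_le hy0] at hξ
      have hξ0 : 0 ≤ ξ := hξ.1
      show deriv (fun t' => f t' ξ) t₀ = deriv g ξ
      have hfun : (fun t' => f t' ξ) = fun t' => ξ * Real.exp (β t' ξ) * ee t' ξ := by
        funext t'; simp only [hfdef]; ring
      rw [hfun]
      exact hcons t₀ ξ hξ0
    have hFTC : (∫ ξ in (0:ℝ)..y₀, deriv g ξ) = g y₀ - g 0 :=
      intervalIntegral.integral_deriv_eq_sub
        (fun x _ => (hg.differentiable (by simp)).differentiableAt)
        ((hg.continuous_deriv (by simp)).intervalIntegrable _ _)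
    have hg0 : g 0 = 0 := by simp [hgdef]
    have hval : f t₀ y₀ * (-Real.exp (α t₀ y₀ - β t₀ y₀))
        + (∫ ξ in (0:ℝ)..y₀, deriv (fun t' => f t' ξ) t₀)
        = y₀ * Real.exp (α t₀ y₀) * (mm t₀ y₀ - ee t₀ y₀) := by
      rw [hicongr, hFTC, hg0, sub_zero]
      simp only [hfdef, hgdef, Real.exp_sub]
      field_simp
      ring
    rw [hval] at hder
    exact hder
  -- the derivative is nonpositive
  have hΦnonpos : ∀ t₀ ∈ Icc (0:ℝ) t_O,
      ρ t₀ * Real.exp (α t₀ (ρ t₀)) * (mm t₀ (ρ t₀) - ee t₀ (ρ t₀)) ≤ 0 := by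
    intro t₀ ht₀
    have h1 : 0 ≤ ρ t₀ * Real.exp (α t₀ (ρ t₀)) :=
      mul_nonneg (hρ_nonneg t₀ ht₀) (Real.exp_pos _).le
    have h2 : mm t₀ (ρ t₀) - ee t₀ (ρ t₀) ≤ 0 := by
      have := hdomE t₀ (ρ t₀) (hρ_nonneg t₀ ht₀)
      have := le_abs_self (mm t₀ (ρ t₀))
      linarith
    exact mul_nonpos_of_nonneg_of_nonpos h1 h2
  -- monotonicity
  have hanti : AntitoneOn Φ (Icc (0:ℝ) t_O) := by
    apply antitoneOn_of_deriv_nonpos (convex_Icc 0 t_O)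
    · intro t ht
      exact ((hΦder t ht).continuousAt).continuousWithinAt
    · intro t ht
      rw [interior_Icc] at ht
      exact ((hΦder t (Ioo_subset_Icc_self ht)).differentiableAt).differentiableWithinAt
    · intro t ht
      rw [interior_Icc] at ht
      rw [(hΦder t (Ioo_subset_Icc_self ht)).deriv]
      exact hΦnonpos t (Ioo_subset_Icc_self ht)
  have hτmem : τ ∈ Icc (0:ℝ) t_O := ⟨hτ0, le_trans hτs hst⟩
  have hsmem : s ∈ Icc (0:ℝ) t_O := ⟨le_trans hτ0 hτs, hst⟩
  have := hanti hτmem hsmem hτs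
  have h2π : (0:ℝ) ≤ 2 * π := by positivity
  exact mul_le_mul_of_nonneg_left this h2π
end

section
/- Let D ⊆ ℝ² be open with coordinates (u,v), let t, r, F, G : D → ℝ be smooth with r > 0 on D, let α, β, γ, φ be smooth functions of (t,r) on an open set containing the image of D under (t,r), and let m ≥ 0. Define 𝐞 := e^{−2α}(γ_t² + ½φ_t²) + e^{−2β}(γ_r² + ½φ_r²) + (m²/2)e^{−2γ}φ², 𝐦 := e^{−α−β}(2γ_tγ_r + φ_tφ_r), 𝐟 := m²e^{−2γ}φ² (all composed with (t(u,v), r(u,v))). Assume on D: ∂_v t = ½e^{F−α}, ∂_v r = ½e^{F−β}, ∂_u t = ½e^{G−α}, ∂_u r = −½e^{G−β}, and assume the Einstein equations ∂_t β = r e^{α+β} 𝐦 and ∂_r α = r e^{2β}(𝐞 − 𝐟) hold on the image of D. Then on D: 2 ∂_v G = e^{F} r e^{β} (𝐞 + 𝐦 − 𝐟) and 2 ∂_u F = −e^{G} r e^{β} (𝐞 − 𝐦 − 𝐟). -/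
open Real

/-- Energy density `𝐞` of the 2+1 dimensional Einstein-wave-Klein-Gordon system. -/
noncomputable def eDen (m : ℝ) (α β γ φ : ℝ → ℝ → ℝ) (t r : ℝ) : ℝ :=
  Real.exp (-2 * α t r) *
      ((deriv (fun s => γ s r) t) ^ 2 + (1 / 2) * (deriv (fun s => φ s r) t) ^ 2)
    + Real.exp (-2 * β t r) *
      ((deriv (fun ρ => γ t ρ) r) ^ 2 + (1 / 2) * (deriv (fun ρ => φ t ρ) r) ^ 2)
    + m ^ 2 / 2 * Real.exp (-2 * γ t r) * (φ t r) ^ 2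

/-- Momentum density `𝐦`. -/
noncomputable def mDen (α β γ φ : ℝ → ℝ → ℝ) (t r : ℝ) : ℝ :=
  Real.exp (-α t r - β t r) *
    (2 * deriv (fun s => γ s r) t * deriv (fun ρ => γ t ρ) r
      + deriv (fun s => φ s r) t * deriv (fun ρ => φ t ρ) r)

/-- Potential density `𝐟 = m² e^{−2γ} φ²`. -/
noncomputable def fDen (m : ℝ) (γ φ : ℝ → ℝ → ℝ) (t r : ℝ) : ℝ :=
  m ^ 2 * Real.exp (-2 * γ t r) * (φ t r) ^ 2

/-- Partial derivative in the first null coordinate `u`. -/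
noncomputable def du (f : ℝ × ℝ → ℝ) (p : ℝ × ℝ) : ℝ :=
  deriv (fun u => f (u, p.2)) p.1

/-- Partial derivative in the second null coordinate `v`. -/
noncomputable def dv (f : ℝ × ℝ → ℝ) (p : ℝ × ℝ) : ℝ :=
  deriv (fun v => f (p.1, v)) p.2

lemma du_hasDerivAt' {f : ℝ × ℝ → ℝ} {p : ℝ × ℝ} (hf : DifferentiableAt ℝ f p) :
    HasDerivAt (fun u => f (u, p.2)) (fderiv ℝ f p (1, 0)) p.1 := by
  have hline : HasDerivAt (fun u : ℝ => (u, p.2)) ((1 : ℝ), (0 : ℝ)) p.1 :=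
    (hasDerivAt_id p.1).prodMk (hasDerivAt_const p.1 p.2)
  have := hf.hasFDerivAt.comp_hasDerivAt p.1 (by simpa using hline)
  simpa [Function.comp_def] using this

lemma dv_hasDerivAt' {f : ℝ × ℝ → ℝ} {p : ℝ × ℝ} (hf : DifferentiableAt ℝ f p) :
    HasDerivAt (fun v => f (p.1, v)) (fderiv ℝ f p (0, 1)) p.2 := by
  have hline : HasDerivAt (fun v : ℝ => (p.1, v)) ((0 : ℝ), (1 : ℝ)) p.2 :=
    (hasDerivAt_const p.2 p.1).prodMk (hasDerivAt_id p.2)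
  have := hf.hasFDerivAt.comp_hasDerivAt p.2 (by simpa using hline)
  simpa [Function.comp_def] using this

lemma du_eq {f : ℝ × ℝ → ℝ} {p : ℝ × ℝ} (hf : DifferentiableAt ℝ f p) :
    du f p = fderiv ℝ f p (1, 0) := (du_hasDerivAt' hf).deriv

lemma dv_eq {f : ℝ × ℝ → ℝ} {p : ℝ × ℝ} (hf : DifferentiableAt ℝ f p) :
    dv f p = fderiv ℝ f p (0, 1) := (dv_hasDerivAt' hf).deriv

lemma du_hasDerivAt {f : ℝ × ℝ → ℝ} {p : ℝ × ℝ} (hf : DifferentiableAt ℝ f p) :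
    HasDerivAt (fun u => f (u, p.2)) (du f p) p.1 := by
  rw [du_eq hf]; exact du_hasDerivAt' hf

lemma dv_hasDerivAt {f : ℝ × ℝ → ℝ} {p : ℝ × ℝ} (hf : DifferentiableAt ℝ f p) :
    HasDerivAt (fun v => f (p.1, v)) (dv f p) p.2 := by
  rw [dv_eq hf]; exact dv_hasDerivAt' hf

lemma mixed_symm {f : ℝ × ℝ → ℝ} {D : Set (ℝ × ℝ)} (hD : IsOpen D)
    (hf : ContDiffOn ℝ (⊤ : ℕ∞) f D) {p : ℝ × ℝ} (hp : p ∈ D) :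
    du (dv f) p = dv (du f) p := by
  have hfa : ContDiffAt ℝ (⊤ : ℕ∞) f p := hf.contDiffAt (hD.mem_nhds hp)
  have hdiff : ∀ q ∈ D, DifferentiableAt ℝ f q := fun q hq =>
    (hf.contDiffAt (hD.mem_nhds hq)).differentiableAt (by simp)
  have hder : HasFDerivAt (fderiv ℝ f) (fderiv ℝ (fderiv ℝ f) p) p := by
    have : ContDiffAt ℝ 1 (fderiv ℝ f) p := hfa.fderiv_right (by exact WithTop.coe_le_coe.mpr le_top)
    exact (this.differentiableAt one_ne_zero).hasFDerivAt
  have hsymm : fderiv ℝ (fderiv ℝ f) p (1, 0) (0, 1)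
      = fderiv ℝ (fderiv ℝ f) p (0, 1) (1, 0) := by
    have := hfa.isSymmSndFDerivAt (by rw [minSmoothness_of_isRCLikeNormedField]; exact WithTop.coe_le_coe.mpr le_top)
    exact this (1,0) (0,1)
  -- left side
  have hleft : du (dv f) p = fderiv ℝ (fderiv ℝ f) p (1, 0) (0, 1) := by
    have hev : ∀ᶠ u in nhds p.1, (u, p.2) ∈ D := by
      have hc : Continuous (fun u : ℝ => (u, p.2)) := continuous_id.prodMk continuous_const
      have : (p.1, p.2) ∈ D := by simpa using hp
      exact hc.continuousAt.preimage_mem_nhds (hD.mem_nhds this)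
    have heq : (fun u => dv f (u, p.2)) =ᶠ[nhds p.1]
        (fun u => fderiv ℝ f (u, p.2) (0, 1)) := by
      filter_upwards [hev] with u hu
      exact dv_eq (hdiff _ hu)
    have hDer : HasDerivAt (fun u => fderiv ℝ f (u, p.2) (0, 1))
        ((fderiv ℝ (fderiv ℝ f) p (1, 0)) (0, 1)) p.1 := by
      have hcomp : HasFDerivAt (fun q => fderiv ℝ f q (0, 1))
          ((ContinuousLinearMap.apply ℝ ℝ ((0:ℝ), (1:ℝ))).comp (fderiv ℝ (fderiv ℝ f) p)) p :=
        (ContinuousLinearMap.apply ℝ ℝ ((0:ℝ),(1:ℝ))).hasFDerivAt.comp p hder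
      have hline : HasDerivAt (fun u : ℝ => (u, p.2)) ((1 : ℝ), (0 : ℝ)) p.1 :=
        (hasDerivAt_id p.1).prodMk (hasDerivAt_const p.1 p.2)
      have := hcomp.comp_hasDerivAt p.1 (by simpa using hline)
      simpa [Function.comp_def] using this
    calc du (dv f) p = deriv (fun u => dv f (u, p.2)) p.1 := rfl
      _ = deriv (fun u => fderiv ℝ f (u, p.2) (0, 1)) p.1 := heq.deriv_eq
      _ = _ := hDer.deriv
  have hright : dv (du f) p = fderiv ℝ (fderiv ℝ f) p (0, 1) (1, 0) := by
    have hev : ∀ᶠ v in nhds p.2, (p.1, v) ∈ D := by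
      have hc : Continuous (fun v : ℝ => (p.1, v)) := continuous_const.prodMk continuous_id
      have : (p.1, p.2) ∈ D := by simpa using hp
      exact hc.continuousAt.preimage_mem_nhds (hD.mem_nhds this)
    have heq : (fun v => du f (p.1, v)) =ᶠ[nhds p.2]
        (fun v => fderiv ℝ f (p.1, v) (1, 0)) := by
      filter_upwards [hev] with v hv
      exact du_eq (hdiff _ hv)
    have hDer : HasDerivAt (fun v => fderiv ℝ f (p.1, v) (1, 0))
        ((fderiv ℝ (fderiv ℝ f) p (0, 1)) (1, 0)) p.2 := by
      have hcomp : HasFDerivAt (fun q => fderiv ℝ f q (1, 0))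
          ((ContinuousLinearMap.apply ℝ ℝ ((1:ℝ), (0:ℝ))).comp (fderiv ℝ (fderiv ℝ f) p)) p :=
        (ContinuousLinearMap.apply ℝ ℝ ((1:ℝ),(0:ℝ))).hasFDerivAt.comp p hder
      have hline : HasDerivAt (fun v : ℝ => (p.1, v)) ((0 : ℝ), (1 : ℝ)) p.2 :=
        (hasDerivAt_const p.2 p.1).prodMk (hasDerivAt_id p.2)
      have := hcomp.comp_hasDerivAt p.2 (by simpa using hline)
      simpa [Function.comp_def] using this
    calc dv (du f) p = deriv (fun v => du f (p.1, v)) p.2 := rfl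
      _ = deriv (fun v => fderiv ℝ f (p.1, v) (1, 0)) p.2 := heq.deriv_eq
      _ = _ := hDer.deriv
  rw [hleft, hright, hsymm]

lemma fderiv_pair {g : ℝ × ℝ → ℝ} {q : ℝ × ℝ} (hg : DifferentiableAt ℝ g q) (x y : ℝ) :
    fderiv ℝ g q (x, y) = x * du g q + y * dv g q := by
  rw [du_eq hg, dv_eq hg]
  have : (x, y) = x • ((1:ℝ), (0:ℝ)) + y • ((0:ℝ), (1:ℝ)) := by simp
  rw [this, map_add, map_smul, map_smul]
  simp [mul_comm]

lemma du_comp {t r g : ℝ × ℝ → ℝ} {p : ℝ × ℝ}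
    (ht : DifferentiableAt ℝ t p) (hr : DifferentiableAt ℝ r p)
    (hg : DifferentiableAt ℝ g (t p, r p)) :
    du (fun q => g (t q, r q)) p
      = du g (t p, r p) * du t p + dv g (t p, r p) * du r p := by
  have hΦ : HasDerivAt (fun u => (t (u, p.2), r (u, p.2))) (du t p, du r p) p.1 :=
    (du_hasDerivAt ht).prodMk (du_hasDerivAt hr)
  have := hg.hasFDerivAt.comp_hasDerivAt p.1 hΦ
  have h2 := this.deriv
  simp only [Function.comp_def] at h2
  rw [du, h2, fderiv_pair hg]
  ring

lemma dv_comp {t r g : ℝ × ℝ → ℝ} {p : ℝ × ℝ}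
    (ht : DifferentiableAt ℝ t p) (hr : DifferentiableAt ℝ r p)
    (hg : DifferentiableAt ℝ g (t p, r p)) :
    dv (fun q => g (t q, r q)) p
      = du g (t p, r p) * dv t p + dv g (t p, r p) * dv r p := by
  have hΦ : HasDerivAt (fun v => (t (p.1, v), r (p.1, v))) (dv t p, dv r p) p.2 :=
    (dv_hasDerivAt ht).prodMk (dv_hasDerivAt hr)
  have := hg.hasFDerivAt.comp_hasDerivAt p.2 hΦ
  have h2 := this.deriv
  simp only [Function.comp_def] at h2
  rw [dv, h2, fderiv_pair hg]
  ring

lemma du_line_exp {D : Set (ℝ × ℝ)} (hD : IsOpen D) {p : ℝ × ℝ} (hp : p ∈ D)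
    {h X Y : ℝ × ℝ → ℝ} {c : ℝ}
    (hX : DifferentiableAt ℝ X p) (hY : DifferentiableAt ℝ Y p)
    (hh : ∀ q ∈ D, h q = c * Real.exp (X q - Y q)) :
    du h p = c * Real.exp (X p - Y p) * (du X p - du Y p) := by
  have hev : ∀ᶠ u in nhds p.1, (u, p.2) ∈ D := by
    have hc : Continuous (fun u : ℝ => (u, p.2)) := continuous_id.prodMk continuous_const
    have : (p.1, p.2) ∈ D := by simpa using hp
    exact hc.continuousAt.preimage_mem_nhds (hD.mem_nhds this)
  have heq : (fun u => h (u, p.2)) =ᶠ[nhds p.1]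
      (fun u => c * Real.exp (X (u, p.2) - Y (u, p.2))) := by
    filter_upwards [hev] with u hu; exact hh _ hu
  have hd : HasDerivAt (fun u => c * Real.exp (X (u, p.2) - Y (u, p.2)))
      (c * (Real.exp (X (p.1, p.2) - Y (p.1, p.2)) * (du X p - du Y p))) p.1 := by
    have h1 : HasDerivAt (fun u => X (u, p.2) - Y (u, p.2)) (du X p - du Y p) p.1 :=
      (du_hasDerivAt hX).sub (du_hasDerivAt hY)
    exact (h1.exp).const_mul c
  rw [du, heq.deriv_eq, hd.deriv]
  simp; ring

lemma dv_line_exp {D : Set (ℝ × ℝ)} (hD : IsOpen D) {p : ℝ × ℝ} (hp : p ∈ D)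
    {h X Y : ℝ × ℝ → ℝ} {c : ℝ}
    (hX : DifferentiableAt ℝ X p) (hY : DifferentiableAt ℝ Y p)
    (hh : ∀ q ∈ D, h q = c * Real.exp (X q - Y q)) :
    dv h p = c * Real.exp (X p - Y p) * (dv X p - dv Y p) := by
  have hev : ∀ᶠ v in nhds p.2, (p.1, v) ∈ D := by
    have hc : Continuous (fun v : ℝ => (p.1, v)) := continuous_const.prodMk continuous_id
    have : (p.1, p.2) ∈ D := by simpa using hp
    exact hc.continuousAt.preimage_mem_nhds (hD.mem_nhds this)
  have heq : (fun v => h (p.1, v)) =ᶠ[nhds p.2]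
      (fun v => c * Real.exp (X (p.1, v) - Y (p.1, v))) := by
    filter_upwards [hev] with v hv; exact hh _ hv
  have hd : HasDerivAt (fun v => c * Real.exp (X (p.1, v) - Y (p.1, v)))
      (c * (Real.exp (X (p.1, p.2) - Y (p.1, p.2)) * (dv X p - dv Y p))) p.2 := by
    have h1 : HasDerivAt (fun v => X (p.1, v) - Y (p.1, v)) (dv X p - dv Y p) p.2 :=
      (dv_hasDerivAt hX).sub (dv_hasDerivAt hY)
    exact (h1.exp).const_mul c
  rw [dv, heq.deriv_eq, hd.deriv]
  simp; ring

lemma du_comp' {t r : ℝ × ℝ → ℝ} {α : ℝ → ℝ → ℝ} {p : ℝ × ℝ}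
    (ht : DifferentiableAt ℝ t p) (hr : DifferentiableAt ℝ r p)
    (hg : DifferentiableAt ℝ (fun q : ℝ × ℝ => α q.1 q.2) (t p, r p)) :
    du (fun q => α (t q) (r q)) p
      = deriv (fun s => α s (r p)) (t p) * du t p
        + deriv (fun ρ => α (t p) ρ) (r p) * du r p :=
  du_comp ht hr hg

lemma dv_comp' {t r : ℝ × ℝ → ℝ} {α : ℝ → ℝ → ℝ} {p : ℝ × ℝ}
    (ht : DifferentiableAt ℝ t p) (hr : DifferentiableAt ℝ r p)
    (hg : DifferentiableAt ℝ (fun q : ℝ × ℝ => α q.1 q.2) (t p, r p)) :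
    dv (fun q => α (t q) (r q)) p
      = deriv (fun s => α s (r p)) (t p) * dv t p
        + deriv (fun ρ => α (t p) ρ) (r p) * dv r p :=
  dv_comp ht hr hg


/-- PDE part of Lemma 4.1: from the frame relations
`∂_v t = ½e^{F−α}`, `∂_v r = ½e^{F−β}`, `∂_u t = ½e^{G−α}`, `∂_u r = −½e^{G−β}`
and the Einstein equations `β_t = r e^{α+β}𝐦`, `α_r = r e^{2β}(𝐞−𝐟)`, one gets
`2∂_v G = e^F r e^{β}(𝐞+𝐦−𝐟)` and `2∂_u F = −e^G r e^{β}(𝐞−𝐦−𝐟)` on `D`. -/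
theorem null_frame_scalars_equations
    (D : Set (ℝ × ℝ)) (hD : IsOpen D)
    (t r F G : ℝ × ℝ → ℝ)
    (ht : ContDiffOn ℝ (⊤ : ℕ∞) t D) (hr : ContDiffOn ℝ (⊤ : ℕ∞) r D)
    (hF : ContDiffOn ℝ (⊤ : ℕ∞) F D) (hG : ContDiffOn ℝ (⊤ : ℕ∞) G D)
    (hrpos : ∀ p ∈ D, 0 < r p)
    (O : Set (ℝ × ℝ)) (hO : IsOpen O) (himg : ∀ p ∈ D, (t p, r p) ∈ O)
    (α β γ φ : ℝ → ℝ → ℝ)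
    (hα : ContDiffOn ℝ (⊤ : ℕ∞) (fun q : ℝ × ℝ => α q.1 q.2) O)
    (hβ : ContDiffOn ℝ (⊤ : ℕ∞) (fun q : ℝ × ℝ => β q.1 q.2) O)
    (hγ : ContDiffOn ℝ (⊤ : ℕ∞) (fun q : ℝ × ℝ => γ q.1 q.2) O)
    (hφ : ContDiffOn ℝ (⊤ : ℕ∞) (fun q : ℝ × ℝ => φ q.1 q.2) O)
    (m : ℝ) (hm : 0 ≤ m)
    (hvt : ∀ p ∈ D, dv t p = (1 / 2) * Real.exp (F p - α (t p) (r p)))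
    (hvr : ∀ p ∈ D, dv r p = (1 / 2) * Real.exp (F p - β (t p) (r p)))
    (hut : ∀ p ∈ D, du t p = (1 / 2) * Real.exp (G p - α (t p) (r p)))
    (hur : ∀ p ∈ D, du r p = -(1 / 2) * Real.exp (G p - β (t p) (r p)))
    (hEin1 : ∀ p ∈ D, deriv (fun s => β s (r p)) (t p)
      = r p * Real.exp (α (t p) (r p) + β (t p) (r p)) * mDen α β γ φ (t p) (r p))
    (hEin2 : ∀ p ∈ D, deriv (fun ρ => α (t p) ρ) (r p)
      = r p * Real.exp (2 * β (t p) (r p))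
          * (eDen m α β γ φ (t p) (r p) - fDen m γ φ (t p) (r p))) :
    ∀ p ∈ D,
      2 * dv G p = Real.exp (F p) * r p * Real.exp (β (t p) (r p))
          * (eDen m α β γ φ (t p) (r p) + mDen α β γ φ (t p) (r p)
              - fDen m γ φ (t p) (r p))
      ∧ 2 * du F p = -(Real.exp (G p) * r p * Real.exp (β (t p) (r p))
          * (eDen m α β γ φ (t p) (r p) - mDen α β γ φ (t p) (r p)
              - fDen m γ φ (t p) (r p))) := by
  intro p hp
  have hmemD := hD.mem_nhds hp
  have hta : DifferentiableAt ℝ t p := (ht.contDiffAt hmemD).differentiableAt (by simp)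
  have hra : DifferentiableAt ℝ r p := (hr.contDiffAt hmemD).differentiableAt (by simp)
  have hFa : DifferentiableAt ℝ F p := (hF.contDiffAt hmemD).differentiableAt (by simp)
  have hGa : DifferentiableAt ℝ G p := (hG.contDiffAt hmemD).differentiableAt (by simp)
  have hqO : (t p, r p) ∈ O := himg p hp
  have hmemO := hO.mem_nhds hqO
  have hαa : DifferentiableAt ℝ (fun q : ℝ × ℝ => α q.1 q.2) (t p, r p) :=
    (hα.contDiffAt hmemO).differentiableAt (by simp)
  have hβa : DifferentiableAt ℝ (fun q : ℝ × ℝ => β q.1 q.2) (t p, r p) :=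
    (hβ.contDiffAt hmemO).differentiableAt (by simp)
  have hA : DifferentiableAt ℝ (fun q : ℝ × ℝ => α (t q) (r q)) p :=
    DifferentiableAt.comp (g := fun q : ℝ × ℝ => α q.1 q.2) p hαa (hta.prodMk hra)
  have hB : DifferentiableAt ℝ (fun q : ℝ × ℝ => β (t q) (r q)) p :=
    DifferentiableAt.comp (g := fun q : ℝ × ℝ => β q.1 q.2) p hβa (hta.prodMk hra)
  -- chain rule for A = α∘(t,r) and B = β∘(t,r)
  have hAu := du_comp' hta hra hαa
  have hAv := dv_comp' hta hra hαa
  have hBu := du_comp' hta hra hβa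
  have hBv := dv_comp' hta hra hβa
  rw [hut p hp, hur p hp] at hAu hBu
  rw [hvt p hp, hvr p hp] at hAv hBv
  rw [hEin1 p hp] at hBu hBv
  rw [hEin2 p hp] at hAu hAv
  -- mixed partial equality for t
  have hM1 : (1 / 2) * Real.exp (F p - α (t p) (r p))
        * (du F p - du (fun q : ℝ × ℝ => α (t q) (r q)) p)
      = (1 / 2) * Real.exp (G p - α (t p) (r p))
        * (dv G p - dv (fun q : ℝ × ℝ => α (t q) (r q)) p) := by
    have h1 := du_line_exp (h := dv t) hD hp hFa hA hvt
    have h2 := dv_line_exp (h := du t) hD hp hGa hA hut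
    rw [← h1, ← h2]
    exact mixed_symm hD ht hp
  -- mixed partial equality for r
  have hM2 : (1 / 2) * Real.exp (F p - β (t p) (r p))
        * (du F p - du (fun q : ℝ × ℝ => β (t q) (r q)) p)
      = -(1 / 2) * Real.exp (G p - β (t p) (r p))
        * (dv G p - dv (fun q : ℝ × ℝ => β (t q) (r q)) p) := by
    have h1 := du_line_exp (h := dv r) hD hp hFa hB hvr
    have h2 := dv_line_exp (h := du r) hD hp hGa hB hur
    rw [← h1, ← h2]
    exact mixed_symm hD hr hp
  rw [hAu, hAv] at hM1
  rw [hBu, hBv] at hM2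
  simp only [two_mul, Real.exp_sub, Real.exp_add] at hM1 hM2
  have hEA := Real.exp_ne_zero (α (t p) (r p))
  have hEB := Real.exp_ne_zero (β (t p) (r p))
  have hX := Real.exp_ne_zero (F p)
  have hY := Real.exp_ne_zero (G p)
  constructor
  · linear_combination (norm := (field_simp; ring))
      (2 * Real.exp (β (t p) (r p)) / Real.exp (G p)) * hM2
      - (2 * Real.exp (α (t p) (r p)) / Real.exp (G p)) * hM1
  · linear_combination (norm := (field_simp; ring))
      (2 * Real.exp (α (t p) (r p)) / Real.exp (F p)) * hM1
      + (2 * Real.exp (β (t p) (r p)) / Real.exp (F p)) * hM2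
end

section
/- Let D := {(u,v) ∈ ℝ² : −v ≤ u ≤ v} and let t, F, G, α : D → ℝ be smooth with t(−v,v) = 0 on the initial surface, ∂_v t = ½e^{F−α}, ∂_u t = ½e^{G−α}, and suppose c⁻ ≤ F ≤ c⁺, c⁻ ≤ G ≤ c⁺, and |α| ≤ c_α on D. Then, with T := (u+v)/2, for every (u,v) ∈ D: e^{c⁻ − c_α} T ≤ t(u,v) ≤ e^{c⁺ + c_α} T. -/
open Real Set

/-- part of Corollary 4.8: in null coordinates with `t = 0` on the initial
surface and `∂_v t = ½e^{F−α}`, `∂_u t = ½e^{G−α}`, uniform bounds `c⁻ ≤ F,G ≤ c⁺`,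
`|α| ≤ c_α` imply `e^{c⁻ − c_α} T ≤ t ≤ e^{c⁺ + c_α} T` with `T = (u+v)/2`. -/
theorem time_comparable
    (t F G α : ℝ × ℝ → ℝ) (cminus cplus cα : ℝ)
    (ht : ContDiffOn ℝ (⊤ : ℕ∞) t {p : ℝ × ℝ | -p.2 ≤ p.1 ∧ p.1 ≤ p.2})
    (hF : ContDiffOn ℝ (⊤ : ℕ∞) F {p : ℝ × ℝ | -p.2 ≤ p.1 ∧ p.1 ≤ p.2})
    (hG : ContDiffOn ℝ (⊤ : ℕ∞) G {p : ℝ × ℝ | -p.2 ≤ p.1 ∧ p.1 ≤ p.2})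
    (hα : ContDiffOn ℝ (⊤ : ℕ∞) α {p : ℝ × ℝ | -p.2 ≤ p.1 ∧ p.1 ≤ p.2})
    (hinit : ∀ v : ℝ, 0 ≤ v → t (-v, v) = 0)
    (hvt : ∀ p : ℝ × ℝ, -p.2 ≤ p.1 → p.1 ≤ p.2 →
      dv t p = (1 / 2) * Real.exp (F p - α p))
    (hut : ∀ p : ℝ × ℝ, -p.2 ≤ p.1 → p.1 ≤ p.2 →
      du t p = (1 / 2) * Real.exp (G p - α p))
    (hFbd : ∀ p : ℝ × ℝ, -p.2 ≤ p.1 → p.1 ≤ p.2 → cminus ≤ F p ∧ F p ≤ cplus)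
    (hGbd : ∀ p : ℝ × ℝ, -p.2 ≤ p.1 → p.1 ≤ p.2 → cminus ≤ G p ∧ G p ≤ cplus)
    (hαbd : ∀ p : ℝ × ℝ, -p.2 ≤ p.1 → p.1 ≤ p.2 → |α p| ≤ cα) :
    ∀ p : ℝ × ℝ, -p.2 ≤ p.1 → p.1 ≤ p.2 →
      Real.exp (cminus - cα) * ((p.1 + p.2) / 2) ≤ t p
        ∧ t p ≤ Real.exp (cplus + cα) * ((p.1 + p.2) / 2) := by

  rintro ⟨u, v⟩ hl hr
  simp only at hl hr ⊢
  have hv0 : 0 ≤ v := by linarith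
  set g : ℝ → ℝ := fun s => t (s, v) with hg
  have hderiv : ∀ s ∈ Icc (-v) u,
      deriv g s = (1 / 2) * Real.exp (G (s, v) - α (s, v)) := by
    intro s hs
    exact hut (s, v) hs.1 (le_trans hs.2 hr)
  have hdiff : ∀ s ∈ Icc (-v) u, DifferentiableAt ℝ g s := by
    intro s hs
    by_contra h
    have h0 : deriv g s = 0 := deriv_zero_of_not_differentiableAt h
    rw [hderiv s hs] at h0
    have : (0:ℝ) < (1 / 2) * Real.exp (G (s, v) - α (s, v)) := by positivity
    linarith
  have hcont : ContinuousOn g (Icc (-v) u) := fun s hs =>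
    (hdiff s hs).continuousAt.continuousWithinAt
  have hdiff' : DifferentiableOn ℝ g (interior (Icc (-v) u)) := fun s hs =>
    (hdiff s (interior_subset hs)).differentiableWithinAt
  have hlo : ∀ s ∈ interior (Icc (-v) u),
      (1 / 2) * Real.exp (cminus - cα) ≤ deriv g s := by
    intro s hs
    have hs' := interior_subset hs
    rw [hderiv s hs']
    have hmem2 : s ≤ v := le_trans hs'.2 hr
    have hGb := (hGbd (s, v) hs'.1 hmem2).1
    have hab := abs_le.1 (hαbd (s, v) hs'.1 hmem2)
    have : cminus - cα ≤ G (s, v) - α (s, v) := by linarith [hab.2]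
    have := Real.exp_le_exp.2 this
    linarith
  have hhi : ∀ s ∈ interior (Icc (-v) u),
      deriv g s ≤ (1 / 2) * Real.exp (cplus + cα) := by
    intro s hs
    have hs' := interior_subset hs
    rw [hderiv s hs']
    have hmem2 : s ≤ v := le_trans hs'.2 hr
    have hGb := (hGbd (s, v) hs'.1 hmem2).2
    have hab := abs_le.1 (hαbd (s, v) hs'.1 hmem2)
    have : G (s, v) - α (s, v) ≤ cplus + cα := by linarith [hab.1]
    have := Real.exp_le_exp.2 this
    linarith
  have hmemL : (-v) ∈ Icc (-v) u := ⟨le_refl _, hl⟩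
  have hmemR : u ∈ Icc (-v) u := ⟨hl, le_refl _⟩
  have key1 := (convex_Icc (-v) u).mul_sub_le_image_sub_of_le_deriv hcont hdiff' hlo
    (-v) hmemL u hmemR hl
  have key2 := (convex_Icc (-v) u).image_sub_le_mul_sub_of_deriv_le hcont hdiff' hhi
    (-v) hmemL u hmemR hl
  have hg0 : g (-v) = 0 := hinit v hv0
  rw [hg0] at key1 key2
  constructor
  · have h1 : Real.exp (cminus - cα) * ((u + v) / 2)
      = (1 / 2) * Real.exp (cminus - cα) * (u - -v) := by ring
    rw [h1]
    simpa using key1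
  · have h2 : Real.exp (cplus + cα) * ((u + v) / 2)
      = (1 / 2) * Real.exp (cplus + cα) * (u - -v) := by ring
    rw [h2]
    simpa using key2
end

section
/- Let A, B : {(u,v) ∈ ℝ² : u ≤ v} → [0,∞) be C¹ nonnegative functions with ∂_u A + ∂_v B = 0 everywhere, and A(u,u) = B(u,u) = 0 for all u. Fix T₀ and suppose the initial flux I := ∫_0^∞ (A + B)(T₀ − R, T₀ + R) dR is finite with I ≤ E₀. Then for every T₁ ≥ T₀: (a) for every v̄ ≥ T₀, ∫_{2T₀−v̄}^{min(v̄, 2T₁−v̄)} B(u', v̄) du' ≤ E₀; (b) for every ū ≤ T₁ , ∫_{max(ū, 2T₀−ū)}^{2T₁−ū} A(ū, v') dv' ≤ E₀. -/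
/-!
Since `A` vanishes on the axis, `Ψ(u, v) = ∫ᵤᵛ A(u, t) dt` is a stream function of the
divergence-free current: `∂ᵥΨ = A`, and differentiating under the integral sign and using
`∂ᵤA = -∂ᵥB` with `B = 0` on the axis gives `∂ᵤΨ = -B`. Hence `Ψ` vanishes on the axis, increases
in `v` and decreases in `u`, and the null fluxes of `B` across `{v = v̄}` and of `A` across
`{u = ū}` are differences of values of `Ψ`. Along the slice `T = T₀`,
`d/dR Ψ(T₀ - R, T₀ + R) = (A + B)(T₀ - R, T₀ + R)`, so `Ψ(T₀ - R, T₀ + R) ≤ I ≤ E₀`. The flux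
across `{v = v̄}` is at most `Ψ(2T₀ - v̄, v̄)`, and the flux across `{u = ū}` is at most
`Ψ(ū, 2T₁ - ū) ≤ Ψ(2T₀ - 2T₁ + ū, 2T₁ - ū)`.
-/

open Real Set MeasureTheory

open Filter Topology intervalIntegral

def halfPlane : Set (ℝ × ℝ) := {p | p.1 ≤ p.2}

lemma isClosed_halfPlane : IsClosed halfPlane := isClosed_le continuous_fst continuous_snd

lemma convex_halfPlane : Convex ℝ halfPlane := by
  simpa [halfPlane, sub_nonpos] using
    convex_halfSpace_le (LinearMap.fst ℝ ℝ ℝ - LinearMap.snd ℝ ℝ ℝ).isLinear (0 : ℝ)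

lemma halfPlane_mem_nhds {p : ℝ × ℝ} (hp : p.1 < p.2) : halfPlane ∈ 𝓝 p :=
  mem_of_superset ((isOpen_lt continuous_fst continuous_snd).mem_nhds hp) fun q hq =>
    show q.1 ≤ q.2 from le_of_lt hq

section PartialDerivatives

variable {f : ℝ × ℝ → ℝ} {p : ℝ × ℝ}

lemma hasDerivAt_du (hf : DifferentiableAt ℝ f p) :
    HasDerivAt (fun u => f (u, p.2)) (du f p) p.1 :=
  (hf.comp p.1 (differentiableAt_id.prodMk (differentiableAt_const _))).hasDerivAt

lemma hasDerivAt_dv (hf : DifferentiableAt ℝ f p) :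
    HasDerivAt (fun v => f (p.1, v)) (dv f p) p.2 :=
  (hf.comp p.2 ((differentiableAt_const _).prodMk differentiableAt_id)).hasDerivAt

lemma du_eq_fderiv (hf : DifferentiableAt ℝ f p) : du f p = fderiv ℝ f p (1, 0) :=
  (hasDerivAt_du hf).unique
    (hf.hasFDerivAt.comp_hasDerivAt p.1 ((hasDerivAt_id _).prodMk (hasDerivAt_const _ _)))

lemma continuousOn_du {U : Set (ℝ × ℝ)} (hf : ContDiffOn ℝ 1 f U) (hU : IsOpen U) :
    ContinuousOn (du f) U :=
  ((hf.continuousOn_fderiv_of_isOpen hU le_rfl).clm_apply continuousOn_const).congr fun _ hp =>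
    du_eq_fderiv ((hf.differentiableOn one_ne_zero).differentiableAt (hU.mem_nhds hp))

end PartialDerivatives

/-- The stream function of the current `(A, B)`. Replacing `t` by `max u t` does not change the
integral for `u ≤ v` but makes the integrand continuous on all of `ℝ²`. -/
noncomputable def streamFunction (A : ℝ × ℝ → ℝ) (u v : ℝ) : ℝ := ∫ t in u..v, A (u, max u t)

section StreamFunction

variable {A B : ℝ × ℝ → ℝ} {u v : ℝ}

lemma continuous_comp_max (hA : ContinuousOn A halfPlane) :
    Continuous fun p : ℝ × ℝ => A (p.1, max p.1 p.2) :=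
  hA.comp_continuous (by fun_prop) fun p => le_max_left p.1 p.2

lemma continuous_streamFunction (hA : ContinuousOn A halfPlane) :
    Continuous fun p : ℝ × ℝ => streamFunction A p.1 p.2 := by
  have hF : Continuous (Function.uncurry fun (p : ℝ × ℝ) t => A (p.1, max p.1 t)) :=
    (continuous_comp_max hA).comp (f := fun q : (ℝ × ℝ) × ℝ => (q.1.1, q.2)) (by fun_prop)
  have hint (p : ℝ × ℝ) (b : ℝ) : IntervalIntegrable (fun t => A (p.1, max p.1 t)) volume 0 b :=
    ((continuous_comp_max hA).comp (Continuous.prodMk_right p.1)).intervalIntegrable _ _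
  have hprim {s : ℝ × ℝ → ℝ} (hs : Continuous s) :
      Continuous fun p => ∫ t in 0..s p, A (p.1, max p.1 t) :=
    continuous_parametric_intervalIntegral_of_continuous hF hs
  refine ((hprim continuous_snd).sub (hprim continuous_fst)).congr fun p => ?_
  exact integral_interval_sub_left (hint p _) (hint p _)

lemma streamFunction_self (A : ℝ × ℝ → ℝ) (u : ℝ) : streamFunction A u u = 0 := integral_same

lemma hasDerivAt_streamFunction_right (hA : ContinuousOn A halfPlane) (huv : u ≤ v) :
    HasDerivAt (streamFunction A u) (A (u, v)) v := by
  have := ((continuous_comp_max hA).comp (Continuous.prodMk_right u)).integral_hasStrictDerivAt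
    u v |>.hasDerivAt
  show HasDerivAt (fun w => ∫ t in u..w, A (u, max u t)) _ _
  simpa only [Function.comp_def, max_eq_right huv] using this

lemma monotoneOn_streamFunction (hA : ContinuousOn A halfPlane)
    (hA_nonneg : ∀ p : ℝ × ℝ, p.1 ≤ p.2 → 0 ≤ A p) (u : ℝ) :
    MonotoneOn (streamFunction A u) (Ici u) := by
  refine monotoneOn_of_hasDerivWithinAt_nonneg (convex_Ici u)
    ((continuous_streamFunction hA).comp (Continuous.prodMk_right u)).continuousOn
    (fun v hv => ?_) fun v hv => hA_nonneg (u, v) ?_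
  all_goals rw [interior_Ici] at hv
  · exact (hasDerivAt_streamFunction_right hA (le_of_lt hv)).hasDerivWithinAt
  · exact le_of_lt hv

lemma streamFunction_nonneg (hA : ContinuousOn A halfPlane)
    (hA_nonneg : ∀ p : ℝ × ℝ, p.1 ≤ p.2 → 0 ≤ A p) (huv : u ≤ v) :
    0 ≤ streamFunction A u v :=
  streamFunction_self A u ▸ monotoneOn_streamFunction hA hA_nonneg u (mem_Ici.2 le_rfl) huv huv

lemma integral_eq_streamFunction_sub (hA : ContinuousOn A halfPlane) {a b : ℝ}
    (hua : u ≤ a) (hab : a ≤ b) :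
    ∫ v in a..b, A (u, v) = streamFunction A u b - streamFunction A u a :=
  integral_eq_sub_of_hasDerivAt
    (fun v hv => hasDerivAt_streamFunction_right hA (hua.trans (uIcc_of_le hab ▸ hv).1))
    (ContinuousOn.intervalIntegrable (hA.comp (by fun_prop) fun v hv =>
      show u ≤ v from hua.trans (uIcc_of_le hab ▸ hv).1))

lemma streamFunction_eq_integral_of_le (hA : ContinuousOn A halfPlane)
    (haxis : ∀ u : ℝ, A (u, u) = 0) {c : ℝ} (hcu : c ≤ u) :
    streamFunction A u v = ∫ t in c..v, A (u, max u t) := by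
  have hint (a b : ℝ) : IntervalIntegrable (fun t => A (u, max u t)) volume a b :=
    ((continuous_comp_max hA).comp (Continuous.prodMk_right u)).intervalIntegrable _ _
  rw [← integral_add_adjacent_intervals (hint c u) (hint u v), streamFunction]
  have hzero : ∫ t in c..u, A (u, max u t) = 0 := by
    rw [integral_congr fun t ht => by
      rw [max_eq_left (uIcc_of_le hcu ▸ ht).2, haxis u], intervalIntegral.integral_zero]
  rw [hzero, zero_add]

lemma exists_lipschitzOnWith_comp_max (hA : ContDiffOn ℝ 1 A halfPlane) (a b : ℝ) :
    ∃ C, ∀ t ∈ Icc a b, LipschitzOnWith C (fun w => A (w, max w t)) (Icc a b) := by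
  obtain ⟨C, hC⟩ := (hA.mono inter_subset_left).exists_lipschitzOnWith one_ne_zero
    (convex_halfPlane.inter ((convex_Icc a b).prod (convex_Icc a b)))
    ((isCompact_Icc.prod isCompact_Icc).inter_left isClosed_halfPlane)
  refine ⟨C, fun t ht => ?_⟩
  have hmax : LipschitzWith 1 fun w : ℝ => (w, max w t) := by
    simpa using LipschitzWith.id.prodMk (LipschitzWith.id.max (LipschitzWith.const t))
  simpa [Function.comp_def] using hC.comp hmax.lipschitzOnWith fun w hw =>
    ⟨le_max_left w t, hw, le_max_of_le_left hw.1, max_le hw.2 ht.2⟩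

lemma hasDerivAt_comp_max (hA : ContDiffOn ℝ 1 A halfPlane) (haxis : ∀ u : ℝ, A (u, u) = 0)
    {t : ℝ} (htu : t ≠ u) :
    HasDerivAt (fun w => A (w, max w t)) ((Ioi u).indicator (fun t => du A (u, t)) t) u := by
  rcases htu.lt_or_gt with h | h
  · rw [indicator_of_notMem (notMem_Ioi.2 h.le)]
    refine (hasDerivAt_const u (0 : ℝ)).congr_of_eventuallyEq ?_
    filter_upwards [Ioi_mem_nhds h] with w hw
    rw [max_eq_left (le_of_lt hw), haxis]
  · rw [indicator_of_mem (mem_Ioi.2 h)]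
    have hdiff := (hA.differentiableOn one_ne_zero).differentiableAt
      (halfPlane_mem_nhds (p := (u, t)) h)
    refine (hasDerivAt_du hdiff).congr_of_eventuallyEq ?_
    filter_upwards [Iio_mem_nhds h] with w hw
    rw [max_eq_right (le_of_lt hw)]

/-- `w ↦ A (w, max w t)` has a kink at `w = t`, hence the Lipschitz form of differentiation under
the integral sign. -/
lemma hasDerivAt_integral_comp_max (hA : ContDiffOn ℝ 1 A halfPlane)
    (haxis : ∀ u : ℝ, A (u, u) = 0) {c : ℝ} (hcu : c < u) (huv : u < v) :
    IntervalIntegrable (fun t => du A (u, t)) volume u v ∧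
      HasDerivAt (fun w => ∫ t in c..v, A (w, max w t)) (∫ t in u..v, du A (u, t)) u := by
  set F' := (Ioi u).indicator fun t => du A (u, t)
  have hcont (w : ℝ) : Continuous fun t => A (w, max w t) :=
    (continuous_comp_max hA.continuousOn).comp (Continuous.prodMk_right w)
  have hF'_meas : AEStronglyMeasurable F' (volume.restrict (uIoc c v)) := by
    refine ((aestronglyMeasurable_indicator_iff measurableSet_Ioi).2 ?_).restrict
    refine ContinuousOn.aestronglyMeasurable ?_ measurableSet_Ioi
    exact (continuousOn_du (hA.mono fun _ hp => le_of_lt hp)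
      (isOpen_lt continuous_fst continuous_snd)).comp (by fun_prop) fun t ht => ht
  obtain ⟨C, hC⟩ := exists_lipschitzOnWith_comp_max hA c v
  obtain ⟨hF'_int, hder⟩ := hasDerivAt_integral_of_dominated_loc_of_lip (Ioo_mem_nhds hcu huv)
    (bound := fun _ => (C : ℝ)) (.of_forall fun w => (hcont w).aestronglyMeasurable.restrict)
    ((hcont u).intervalIntegrable _ _) hF'_meas
    (.of_forall fun t ht => by
      simpa using (hC t (Ioc_subset_Icc_self (uIoc_of_le (hcu.trans huv).le ▸ ht))).mono
        Ioo_subset_Icc_self)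
    intervalIntegrable_const
    (((countable_singleton u).ae_notMem volume).mono fun t ht _ =>
      hasDerivAt_comp_max hA haxis ht)
  have hF'_eq : EqOn F' (fun t => du A (u, t)) (uIoc u v) := fun t ht =>
    indicator_of_mem (uIoc_of_le huv.le ▸ ht).1 _
  have hF'_zero : ∫ t in c..u, F' t = 0 := by
    rw [integral_congr fun t ht => indicator_of_notMem (notMem_Ioi.2 (uIcc_of_le hcu.le ▸ ht).2) _,
      intervalIntegral.integral_zero]
  have hu : u ∈ uIcc c v := mem_uIcc_of_le hcu.le huv.le
  have hF'_int_left := hF'_int.mono_set (uIcc_subset_uIcc left_mem_uIcc hu)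
  have hF'_int_right := hF'_int.mono_set (uIcc_subset_uIcc hu right_mem_uIcc)
  refine ⟨hF'_int_right.congr hF'_eq, ?_⟩
  rwa [← integral_add_adjacent_intervals hF'_int_left hF'_int_right, hF'_zero, zero_add,
    integral_congr_ae (.of_forall fun t ht => hF'_eq ht)] at hder

variable (hA : ContDiffOn ℝ 1 A halfPlane) (hB : ContDiffOn ℝ 1 B halfPlane)
  (hdiv : ∀ p : ℝ × ℝ, p.1 ≤ p.2 → du A p + dv B p = 0)
  (haxis : ∀ u : ℝ, A (u, u) = 0 ∧ B (u, u) = 0)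
include hA hB hdiv haxis

lemma hasDerivAt_streamFunction_left (huv : u < v) :
    HasDerivAt (fun w => streamFunction A w v) (-B (u, v)) u := by
  obtain ⟨hint, hder⟩ := hasDerivAt_integral_comp_max hA (fun u => (haxis u).1) (sub_one_lt u) huv
  have hdu : EqOn (fun t => du A (u, t)) (fun t => -dv B (u, t)) (uIcc u v) := fun t ht =>
    eq_neg_of_add_eq_zero_left (hdiv (u, t) (uIcc_of_le huv.le ▸ ht).1)
  have hflux : ∫ t in u..v, du A (u, t) = -B (u, v) := by
    rw [integral_congr hdu, intervalIntegral.integral_neg,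
      integral_eq_sub_of_hasDeriv_right_of_le (f := fun t => B (u, t)) huv.le
        (hB.continuousOn.comp (by fun_prop) fun t ht => ht.1)
        (fun t ht => (hasDerivAt_dv ((hB.differentiableOn one_ne_zero).differentiableAt
          (halfPlane_mem_nhds (p := (u, t)) ht.1))).hasDerivWithinAt)
        ((hint.congr (hdu.mono uIoc_subset_uIcc)).neg.congr fun t _ => neg_neg _),
      (haxis u).2, sub_zero]
  rw [hflux] at hder
  refine hder.congr_of_eventuallyEq ?_
  filter_upwards [Ioi_mem_nhds (sub_one_lt u)] with w hw
  exact streamFunction_eq_integral_of_le hA.continuousOn (fun u => (haxis u).1) (le_of_lt hw)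

lemma antitoneOn_streamFunction (hB_nonneg : ∀ p : ℝ × ℝ, p.1 ≤ p.2 → 0 ≤ B p) (v : ℝ) :
    AntitoneOn (fun u => streamFunction A u v) (Iic v) := by
  refine antitoneOn_of_hasDerivWithinAt_nonpos (convex_Iic v)
    ((continuous_streamFunction hA.continuousOn).comp (Continuous.prodMk_left v)).continuousOn
    (fun u hu => ?_) fun u hu => neg_nonpos.2 (hB_nonneg (u, v) ?_)
  all_goals rw [interior_Iic] at hu
  · exact (hasDerivAt_streamFunction_left hA hB hdiv haxis hu).hasDerivWithinAt
  · exact le_of_lt hu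

lemma integral_eq_streamFunction_sub_left {a b : ℝ} (hab : a ≤ b) (hbv : b ≤ v) :
    ∫ u in a..b, B (u, v) = streamFunction A a v - streamFunction A b v := by
  have hFTC := integral_eq_sub_of_hasDeriv_right_of_le (f := fun u => streamFunction A u v) hab
    ((continuous_streamFunction hA.continuousOn).comp (Continuous.prodMk_left v)).continuousOn
    (fun u hu => (hasDerivAt_streamFunction_left hA hB hdiv haxis
      (hu.2.trans_le hbv)).hasDerivWithinAt)
    (ContinuousOn.intervalIntegrable (hB.continuousOn.comp (by fun_prop) fun u hu =>
      show u ≤ v from (uIcc_of_le hab ▸ hu).2.trans hbv).neg)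
  rw [intervalIntegral.integral_neg] at hFTC
  linarith

lemma hasStrictFDerivAt_streamFunction {p : ℝ × ℝ} (hp : p.1 < p.2) :
    HasStrictFDerivAt (fun q : ℝ × ℝ => streamFunction A q.1 q.2)
      (((1 : ℝ →L[ℝ] ℝ).smulRight (-B p)).coprod ((1 : ℝ →L[ℝ] ℝ).smulRight (A p))) p := by
  have hopen : ∀ᶠ q in 𝓝 p, q.1 < q.2 := (isOpen_lt continuous_fst continuous_snd).mem_nhds hp
  have hsmul : Continuous fun c : ℝ => (1 : ℝ →L[ℝ] ℝ).smulRight c := by fun_prop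
  refine hasStrictFDerivAt_uncurry_coprod (f := streamFunction A)
    (f₁ := fun x y => (1 : ℝ →L[ℝ] ℝ).smulRight (-B (x, y)))
    (f₂ := fun x y => (1 : ℝ →L[ℝ] ℝ).smulRight (A (x, y))) ?_ ?_ ?_ ?_
  · filter_upwards [hopen] with q hq
    exact (hasDerivAt_streamFunction_left hA hB hdiv haxis hq).hasFDerivAt
  · filter_upwards [hopen] with q hq
    exact (hasDerivAt_streamFunction_right hA.continuousOn hq.le).hasFDerivAt
  · exact hsmul.continuousAt.comp (hB.continuousOn.continuousAt (halfPlane_mem_nhds hp)).neg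
  · exact hsmul.continuousAt.comp (hA.continuousOn.continuousAt (halfPlane_mem_nhds hp))

lemma hasDerivAt_streamFunction_slice (T₀ : ℝ) {r : ℝ} (hr : 0 < r) :
    HasDerivAt (fun r => streamFunction A (T₀ - r) (T₀ + r))
      (A (T₀ - r, T₀ + r) + B (T₀ - r, T₀ + r)) r := by
  have := (hasStrictFDerivAt_streamFunction hA hB hdiv haxis (p := (T₀ - r, T₀ + r))
    (by linarith)).hasFDerivAt.comp_hasDerivAt r
    (((hasDerivAt_id r).const_sub T₀).prodMk ((hasDerivAt_id r).const_add T₀))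
  simpa [Function.comp_def, add_comm] using this

lemma streamFunction_slice_eq_integral (T₀ : ℝ) {R : ℝ} (hR : 0 ≤ R) :
    streamFunction A (T₀ - R) (T₀ + R) =
      ∫ r in (0 : ℝ)..R, (A (T₀ - r, T₀ + r) + B (T₀ - r, T₀ + r)) := by
  have hslice : MapsTo (fun r => (T₀ - r, T₀ + r)) (uIcc 0 R) halfPlane := fun r hr =>
    show T₀ - r ≤ T₀ + r by linarith [(uIcc_of_le hR ▸ hr).1]
  have hcont : ContinuousOn (fun r => A (T₀ - r, T₀ + r) + B (T₀ - r, T₀ + r)) (uIcc 0 R) :=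
    (hA.continuousOn.comp (by fun_prop) hslice).add (hB.continuousOn.comp (by fun_prop) hslice)
  have hΨ : Continuous fun r => streamFunction A (T₀ - r) (T₀ + r) :=
    (continuous_streamFunction hA.continuousOn).comp (f := fun r => (T₀ - r, T₀ + r)) (by fun_prop)
  have hFTC := integral_eq_sub_of_hasDeriv_right_of_le hR hΨ.continuousOn
    (fun r hr => (hasDerivAt_streamFunction_slice hA hB hdiv haxis T₀ hr.1).hasDerivWithinAt)
    hcont.intervalIntegrable
  rw [hFTC, sub_zero, add_zero, streamFunction_self, sub_zero]

end StreamFunction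

/-- abstract form of Proposition 4.6: for a nonnegative divergence-free
current `(A,B)` on `{u ≤ v}` vanishing on the axis, the flux through any null segment
between the slices `T = T₀` and `T = T₁` is bounded by the initial flux bound `E₀`. -/
theorem null_flux_bounds_abstract
    (A B : ℝ × ℝ → ℝ) (T₀ E₀ : ℝ)
    (hA1 : ContDiffOn ℝ 1 A {p : ℝ × ℝ | p.1 ≤ p.2})
    (hB1 : ContDiffOn ℝ 1 B {p : ℝ × ℝ | p.1 ≤ p.2})
    (hA_nonneg : ∀ p : ℝ × ℝ, p.1 ≤ p.2 → 0 ≤ A p)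
    (hB_nonneg : ∀ p : ℝ × ℝ, p.1 ≤ p.2 → 0 ≤ B p)
    (hdiv : ∀ p : ℝ × ℝ, p.1 ≤ p.2 → du A p + dv B p = 0)
    (haxis : ∀ u : ℝ, A (u, u) = 0 ∧ B (u, u) = 0)
    (hfin : IntegrableOn (fun R => A (T₀ - R, T₀ + R) + B (T₀ - R, T₀ + R)) (Ioi 0))
    (hI : (∫ R in Ioi (0:ℝ), (A (T₀ - R, T₀ + R) + B (T₀ - R, T₀ + R))) ≤ E₀) :
    ∀ T₁ : ℝ, T₀ ≤ T₁ →
      (∀ vb : ℝ, T₀ ≤ vb →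
        (∫ u' in (2 * T₀ - vb)..(min vb (2 * T₁ - vb)), B (u', vb)) ≤ E₀)
      ∧ (∀ ub : ℝ, ub ≤ T₁ →
        (∫ v' in (max ub (2 * T₀ - ub))..(2 * T₁ - ub), A (ub, v')) ≤ E₀) := by
  have hslice (v : ℝ) (hv : T₀ ≤ v) : streamFunction A (2 * T₀ - v) v ≤ E₀ := by
    obtain ⟨R, hR, rfl⟩ : ∃ R, 0 ≤ R ∧ T₀ + R = v := ⟨v - T₀, by linarith, by ring⟩
    rw [show 2 * T₀ - (T₀ + R) = T₀ - R by ring,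
      streamFunction_slice_eq_integral hA1 hB1 hdiv haxis T₀ hR, integral_of_le hR]
    refine (setIntegral_mono_set hfin ?_ Ioc_subset_Ioi_self.eventuallyLE).trans hI
    refine (ae_restrict_iff' measurableSet_Ioi).2 (.of_forall fun r (hr : 0 < r) => ?_)
    exact add_nonneg (hA_nonneg _ (by dsimp; linarith)) (hB_nonneg _ (by dsimp; linarith))
  intro T₁ hT₁
  refine ⟨fun vb hvb => ?_, fun ub hub => ?_⟩
  · rw [integral_eq_streamFunction_sub_left hA1 hB1 hdiv haxis
      (le_min (by linarith) (by linarith)) (min_le_left _ _)]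
    linarith [hslice vb hvb,
      streamFunction_nonneg hA1.continuousOn hA_nonneg (min_le_left vb (2 * T₁ - vb))]
  · rw [integral_eq_streamFunction_sub hA1.continuousOn (le_max_left _ _)
      (max_le (by linarith) (by linarith))]
    have := antitoneOn_streamFunction hA1 hB1 hdiv haxis hB_nonneg (2 * T₁ - ub)
      (show 2 * T₀ - (2 * T₁ - ub) ≤ 2 * T₁ - ub by linarith) (show ub ≤ 2 * T₁ - ub by linarith)
      (show 2 * T₀ - (2 * T₁ - ub) ≤ ub by linarith)
    linarith [hslice (2 * T₁ - ub) (by linarith),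
      streamFunction_nonneg hA1.continuousOn hA_nonneg (le_max_left ub (2 * T₀ - ub))]
end

section
/- Let D := {(u,v) ∈ ℝ² : u ≤ v} and let γ, φ, λ, F, G, r : D → ℝ be smooth with r ≥ 0, r(u,u) = 0, 2λ = F + G, and |F| ≤ c, |G| ≤ c on D, for a constant c, and let m ≥ 0. Define p := m²e^{−2γ}φ², 𝐞+𝐦 := 4e^{−2F}(∂_vγ)² + 2e^{−2F}(∂_vφ)² + p/2, 𝐞−𝐦 := 4e^{−2G}(∂_uγ)² + 2e^{−2G}(∂_uφ)² + p/2, A := r e^{2λ} e^{−G}(𝐞+𝐦), and B := r e^{2λ} e^{−F}(𝐞−𝐦). Assume ∂_u A + ∂_v B = 0 on D, and for some T₀ assume ∫_0^∞ (A+B)(T₀−R, T₀+R) dR ≤ E₀. Then there is a constant C depending only on c such that for all T₁ ≥ T₀ and all v̄ ≥ T₀: ∫_{2T₀−v̄}^{min(v̄, 2T₁−v̄)} ( (∂_uγ)² + (∂_uφ)² + m²e^{−2γ}φ² ) r du' ≤ C E₀, and for all ū ≤ T₁: ∫_{max(ū, 2T₀−ū)}^{2T₁−ū} ( (∂_vγ)²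 + (∂_vφ)² + m²e^{−2γ}φ² ) r dv' ≤ C E₀. -/
open Real Set MeasureTheory Topology


namespace NullFluxAux

/-- The closed half-plane domain. -/
def Dset : Set (ℝ × ℝ) := {p : ℝ × ℝ | p.1 ≤ p.2}

lemma convex_Dset : Convex ℝ Dset := by
  intro p hp q hq a b ha hb hab
  have hp' : p.1 ≤ p.2 := hp
  have hq' : q.1 ≤ q.2 := hq
  show (a • p + b • q).1 ≤ (a • p + b • q).2
  simp only [Prod.fst_add, Prod.snd_add, Prod.smul_fst, Prod.smul_snd, smul_eq_mul]
  have h1 : a * p.1 ≤ a * p.2 := mul_le_mul_of_nonneg_left hp' ha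
  have h2 : b * q.1 ≤ b * q.2 := mul_le_mul_of_nonneg_left hq' hb
  linarith

lemma interior_Dset : interior Dset = {p : ℝ × ℝ | p.1 < p.2} := by
  apply Subset.antisymm
  · intro p hp
    have hple : p.1 ≤ p.2 := show p ∈ Dset from interior_subset hp
    rcases lt_or_eq_of_le hple with h | h
    · exact h
    · exfalso
      rcases Metric.mem_nhds_iff.1 (mem_interior_iff_mem_nhds.1 hp) with ⟨ε, hε, hb⟩
      have hq : ((p.1 + ε / 2, p.2) : ℝ × ℝ) ∈ Metric.ball p ε := by
        rw [Metric.mem_ball, Prod.dist_eq]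
        simp only [Real.dist_eq]
        rw [add_sub_cancel_left, sub_self, abs_zero]
        rw [abs_of_pos (by linarith)]
        apply max_lt (by linarith) hε
      have := hb hq
      have h2 : p.1 + ε / 2 ≤ p.2 := this
      rw [← h] at h2
      linarith
  · exact interior_maximal (fun p (hp : p.1 < p.2) => show p ∈ Dset from le_of_lt hp)
      (isOpen_lt continuous_fst continuous_snd)

lemma uniqueDiffOn_Dset : UniqueDiffOn ℝ Dset := by
  apply uniqueDiffOn_convex convex_Dset
  rw [interior_Dset]
  exact ⟨((0 : ℝ), (1 : ℝ)), by norm_num⟩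

lemma mem_interior_Dset {p : ℝ × ℝ} (h : p.1 < p.2) : p ∈ interior Dset := by
  rw [interior_Dset]; exact h

/-- `u`-partial derivative at an interior point. -/
lemma hasDerivAt_fst {f : ℝ × ℝ → ℝ} (hf : ContDiffOn ℝ 1 f Dset) {p : ℝ × ℝ}
    (hp : p ∈ interior Dset) :
    HasDerivAt (fun u => f (u, p.2)) (fderivWithin ℝ f Dset p ((1 : ℝ), (0 : ℝ))) p.1 := by
  have hnb : Dset ∈ 𝓝 p := mem_interior_iff_mem_nhds.1 hp
  have hd : DifferentiableAt ℝ f p := (hf.contDiffAt hnb).differentiableAt one_ne_zero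
  have hline : HasDerivAt (fun u : ℝ => ((u, p.2) : ℝ × ℝ)) ((1 : ℝ), (0 : ℝ)) p.1 :=
    (hasDerivAt_id p.1).prodMk (hasDerivAt_const p.1 p.2)
  have h := hd.hasFDerivAt.comp_hasDerivAt p.1 hline
  rw [fderivWithin_of_mem_nhds hnb]
  exact h

lemma hasDerivAt_snd {f : ℝ × ℝ → ℝ} (hf : ContDiffOn ℝ 1 f Dset) {p : ℝ × ℝ}
    (hp : p ∈ interior Dset) :
    HasDerivAt (fun v => f (p.1, v)) (fderivWithin ℝ f Dset p ((0 : ℝ), (1 : ℝ))) p.2 := by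
  have hnb : Dset ∈ 𝓝 p := mem_interior_iff_mem_nhds.1 hp
  have hd : DifferentiableAt ℝ f p := (hf.contDiffAt hnb).differentiableAt one_ne_zero
  have hline : HasDerivAt (fun v : ℝ => ((p.1, v) : ℝ × ℝ)) ((0 : ℝ), (1 : ℝ)) p.2 :=
    (hasDerivAt_const p.2 p.1).prodMk (hasDerivAt_id p.2)
  have h := hd.hasFDerivAt.comp_hasDerivAt p.2 hline
  rw [fderivWithin_of_mem_nhds hnb]
  exact h

lemma continuousOn_fderivWithin_apply {f : ℝ × ℝ → ℝ} (hf : ContDiffOn ℝ 1 f Dset) (w : ℝ × ℝ) :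
    ContinuousOn (fun p => fderivWithin ℝ f Dset p w) Dset :=
  (hf.continuousOn_fderivWithin uniqueDiffOn_Dset le_rfl).clm_apply continuousOn_const

lemma contDiffOn_fderivWithin_apply {f : ℝ × ℝ → ℝ} (hf : ContDiffOn ℝ 2 f Dset) (w : ℝ × ℝ) :
    ContDiffOn ℝ 1 (fun p => fderivWithin ℝ f Dset p w) Dset :=
  (hf.fderivWithin uniqueDiffOn_Dset (by norm_num)).clm_apply contDiffOn_const

/-- elementary pointwise bound -/
lemma bound_aux {x y P R g c : ℝ} (hx : 0 ≤ x) (hy : 0 ≤ y) (hP : 0 ≤ P) (hR : 0 ≤ R)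
    (hg : |g| ≤ c) :
    (x + y + P) * R ≤ 2 * Real.exp c *
      (R * Real.exp g * (4 * Real.exp (-2 * g) * x + 2 * Real.exp (-2 * g) * y + P / 2)) := by
  obtain ⟨hg1, hg2⟩ := abs_le.1 hg
  have h1 : (1 : ℝ) ≤ Real.exp c * Real.exp g * Real.exp (-2 * g) := by
    rw [← Real.exp_add, ← Real.exp_add]
    exact Real.one_le_exp (by linarith)
  have h2 : (1 : ℝ) ≤ Real.exp c * Real.exp g := by
    rw [← Real.exp_add]
    exact Real.one_le_exp (by linarith)
  nlinarith [mul_nonneg (mul_nonneg hx hR) (sub_nonneg.2 h1),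
    mul_nonneg (mul_nonneg hy hR) (sub_nonneg.2 h1),
    mul_nonneg (mul_nonneg hP hR) (sub_nonneg.2 h2),
    mul_nonneg hx hR, mul_nonneg hy hR, mul_nonneg hP hR]

lemma contOn_comp {g : ℝ × ℝ → ℝ} (hg : ContinuousOn g Dset) {f : ℝ → ℝ × ℝ}
    (hf : Continuous f) {s : Set ℝ} (hmaps : ∀ x ∈ s, (f x).1 ≤ (f x).2) :
    ContinuousOn (fun x => g (f x)) s := by
  have h := hg.comp hf.continuousOn (fun x hx => show f x ∈ Dset from hmaps x hx)
  exact h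

/-- The basic "Green's theorem" identity on the trapezoidal region
`{(u,v) : L ≤ u ≤ v, 2T₀ ≤ u+v, v ≤ V}`. -/
theorem flux_identity (Atil Btil gA gB : ℝ × ℝ → ℝ) (T₀ L V : ℝ)
    (hAc : ContinuousOn Atil Dset) (hBc : ContinuousOn Btil Dset)
    (hgAc : ContinuousOn gA Dset) (hgBc : ContinuousOn gB Dset)
    (hAd : ∀ p ∈ interior Dset, HasDerivAt (fun u => Atil (u, p.2)) (gA p) p.1)
    (hBd : ∀ p ∈ interior Dset, HasDerivAt (fun v => Btil (p.1, v)) (gB p) p.2)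
    (hsum : ∀ p ∈ interior Dset, gA p + gB p = 0)
    (hA0 : ∀ u : ℝ, Atil (u, u) = 0) (hB0 : ∀ u : ℝ, Btil (u, u) = 0)
    (hLV : L ≤ V) (hTLV : 2 * T₀ ≤ L + V) :
    (∫ v in (max T₀ L)..V, Atil (max L (2 * T₀ - v), v))
      + (∫ u in L..(max T₀ L), Btil (u, 2 * T₀ - u))
      = ∫ u in L..V, Btil (u, V) := by
  set t₀ : ℝ := max T₀ L with ht₀def
  have hT₀V : T₀ ≤ V := by linarith
  have ht₀V : t₀ ≤ V := max_le hT₀V hLV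
  have hLt₀ : L ≤ t₀ := le_max_right _ _
  -- the region
  set S : Set (ℝ × ℝ) :=
    {p : ℝ × ℝ | L ≤ p.1 ∧ p.1 ≤ p.2 ∧ 2 * T₀ ≤ p.1 + p.2 ∧ p.2 ≤ V} with hSdef
  have hSD : S ⊆ Dset := fun p hp => hp.2.1
  have hSclosed : IsClosed S := by
    have : S = {p : ℝ × ℝ | L ≤ p.1} ∩ ({p : ℝ × ℝ | p.1 ≤ p.2} ∩
        ({p : ℝ × ℝ | 2 * T₀ ≤ p.1 + p.2} ∩ {p : ℝ × ℝ | p.2 ≤ V})) := rfl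
    rw [this]
    exact (isClosed_le continuous_const continuous_fst).inter
      ((isClosed_le continuous_fst continuous_snd).inter
        ((isClosed_le continuous_const (continuous_fst.add continuous_snd)).inter
          (isClosed_le continuous_snd continuous_const)))
  have hSmeas : MeasurableSet S := hSclosed.measurableSet
  have hScompact : IsCompact S := by
    apply (isCompact_Icc (a := ((L, 2 * T₀ - V) : ℝ × ℝ)) (b := ((V, V) : ℝ × ℝ))).of_isClosed_subset
      hSclosed
    intro p hp
    obtain ⟨h1, h2, h3, h4⟩ := hp
    rw [Set.mem_Icc, Prod.le_def, Prod.le_def]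
    dsimp only
    exact ⟨⟨h1, by linarith⟩, by linarith, h4⟩
  -- integrability of the indicators
  have hgAS : IntegrableOn gA S := (hgAc.mono hSD).integrableOn_compact hScompact
  have hgBS : IntegrableOn gB S := (hgBc.mono hSD).integrableOn_compact hScompact
  have hIA : Integrable (S.indicator gA) := (integrable_indicator_iff hSmeas).2 hgAS
  have hIB : Integrable (S.indicator gB) := (integrable_indicator_iff hSmeas).2 hgBS
  -- inner integral for gA, slicing in u at fixed v
  have hinnerA : ∀ v : ℝ, (∫ u : ℝ, S.indicator gA (u, v)) =
      (Icc t₀ V).indicator (fun v => - Atil (max L (2 * T₀ - v), v)) v := by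
    intro v
    by_cases hv : v ∈ Icc t₀ V
    · have hLv : L ≤ v := le_trans (le_trans (le_max_right T₀ L) hv.1) le_rfl
      have hT₀v : T₀ ≤ v := le_trans (le_max_left T₀ L) hv.1
      set a : ℝ := max L (2 * T₀ - v) with hadef
      have hav : a ≤ v := max_le hLv (by linarith)
      have hslice : (fun u => S.indicator gA (u, v)) =
          (Icc a v).indicator (fun u => gA (u, v)) := by
        funext u
        have hiff : ((u, v) : ℝ × ℝ) ∈ S ↔ u ∈ Icc a v := by
          simp only [hSdef, mem_setOf_eq, mem_Icc, hadef, max_le_iff]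
          constructor
          · rintro ⟨h1, h2, h3, _⟩
            exact ⟨⟨h1, by linarith⟩, h2⟩
          · rintro ⟨⟨h1, h1'⟩, h2⟩
            exact ⟨h1, h2, by linarith, hv.2⟩
        rw [Set.indicator_apply, Set.indicator_apply, if_congr hiff rfl rfl]
      rw [hslice, MeasureTheory.integral_indicator measurableSet_Icc]
      have hcont : ContinuousOn (fun u => Atil (u, v)) (Icc a v) :=
        contOn_comp hAc (continuous_id.prodMk continuous_const) (fun u hu => hu.2)
      have hderiv : ∀ u ∈ Ioo a v,
          HasDerivWithinAt (fun u => Atil (u, v)) (gA (u, v)) (Ioi u) u := by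
        intro u hu
        have hint : ((u, v) : ℝ × ℝ) ∈ interior Dset := by
          rw [interior_Dset]; exact hu.2
        exact (hAd (u, v) hint).hasDerivWithinAt
      have hgint : IntervalIntegrable (fun u => gA (u, v)) volume a v :=
        ContinuousOn.intervalIntegrable_of_Icc hav
          (contOn_comp hgAc (continuous_id.prodMk continuous_const) (fun u hu => hu.2))
      have hftc := intervalIntegral.integral_eq_sub_of_hasDeriv_right_of_le hav hcont hderiv hgint
      rw [Set.indicator_of_mem hv, MeasureTheory.integral_Icc_eq_integral_Ioc,
        ← intervalIntegral.integral_of_le hav, hftc, hA0 v]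
      ring
    · rw [Set.indicator_of_notMem hv]
      have hslice : (fun u => S.indicator gA (u, v)) = fun _ => (0 : ℝ) := by
        funext u
        rw [Set.indicator_apply, if_neg]
        intro hmem
        obtain ⟨h1, h2, h3, h4⟩ := hmem
        exact hv ⟨max_le (by linarith) (by linarith), h4⟩
      rw [hslice, integral_zero]
  -- inner integral for gB, slicing in v at fixed u
  have hinnerB : ∀ u : ℝ, (∫ v : ℝ, S.indicator gB (u, v)) =
      (Icc L V).indicator (fun u => Btil (u, V) - Btil (u, max u (2 * T₀ - u))) u := by
    intro u
    by_cases hu : u ∈ Icc L V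
    · set b : ℝ := max u (2 * T₀ - u) with hbdef
      have hbV : b ≤ V := max_le hu.2 (by linarith [hu.1])
      have hub : u ≤ b := le_max_left _ _
      have hslice : (fun v => S.indicator gB (u, v)) =
          (Icc b V).indicator (fun v => gB (u, v)) := by
        funext v
        have hiff : ((u, v) : ℝ × ℝ) ∈ S ↔ v ∈ Icc b V := by
          simp only [hSdef, mem_setOf_eq, mem_Icc, hbdef, max_le_iff]
          constructor
          · rintro ⟨h1, h2, h3, h4⟩
            exact ⟨⟨h2, by linarith⟩, h4⟩
          · rintro ⟨⟨h1, h1'⟩, h2⟩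
            exact ⟨hu.1, h1, by linarith, h2⟩
        rw [Set.indicator_apply, Set.indicator_apply, if_congr hiff rfl rfl]
      rw [hslice, MeasureTheory.integral_indicator measurableSet_Icc]
      have hcont : ContinuousOn (fun v => Btil (u, v)) (Icc b V) :=
        contOn_comp hBc (continuous_const.prodMk continuous_id) (fun v hv => le_trans hub hv.1)
      have hderiv : ∀ v ∈ Ioo b V,
          HasDerivWithinAt (fun v => Btil (u, v)) (gB (u, v)) (Ioi v) v := by
        intro v hv
        have hint : ((u, v) : ℝ × ℝ) ∈ interior Dset := by
          rw [interior_Dset]; exact lt_of_le_of_lt hub hv.1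
        exact (hBd (u, v) hint).hasDerivWithinAt
      have hgint : IntervalIntegrable (fun v => gB (u, v)) volume b V :=
        ContinuousOn.intervalIntegrable_of_Icc hbV
          (contOn_comp hgBc (continuous_const.prodMk continuous_id) (fun v hv => le_trans hub hv.1))
      have hftc := intervalIntegral.integral_eq_sub_of_hasDeriv_right_of_le hbV hcont hderiv hgint
      rw [Set.indicator_of_mem hu, MeasureTheory.integral_Icc_eq_integral_Ioc,
        ← intervalIntegral.integral_of_le hbV, hftc]
    · rw [Set.indicator_of_notMem hu]
      have hslice : (fun v => S.indicator gB (u, v)) = fun _ => (0 : ℝ) := by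
        funext v
        rw [Set.indicator_apply, if_neg]
        intro hmem
        obtain ⟨h1, h2, h3, h4⟩ := hmem
        exact hu ⟨h1, by linarith⟩
      rw [hslice, integral_zero]
  -- compute the two integrals as iterated integrals
  have hIA' : Integrable (S.indicator gA) ((volume : Measure ℝ).prod (volume : Measure ℝ)) := by
    rw [← MeasureTheory.Measure.volume_eq_prod]; exact hIA
  have hIB' : Integrable (S.indicator gB) ((volume : Measure ℝ).prod (volume : Measure ℝ)) := by
    rw [← MeasureTheory.Measure.volume_eq_prod]; exact hIB
  have hprodA : Integrable (Function.uncurry fun u v => S.indicator gA (u, v))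
      ((volume : Measure ℝ).prod (volume : Measure ℝ)) := hIA'
  have hprodB : Integrable (Function.uncurry fun u v => S.indicator gB (u, v))
      ((volume : Measure ℝ).prod (volume : Measure ℝ)) := hIB'
  have hIAval : (∫ p : ℝ × ℝ, S.indicator gA p) =
      - ∫ v in t₀..V, Atil (max L (2 * T₀ - v), v) := by
    have h1 : (∫ p : ℝ × ℝ, S.indicator gA p) = ∫ u : ℝ, ∫ v : ℝ, S.indicator gA (u, v) := by
      rw [MeasureTheory.Measure.volume_eq_prod]
      exact MeasureTheory.integral_prod _ hIA'
    have h2 : (∫ u : ℝ, ∫ v : ℝ, S.indicator gA (u, v))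
        = ∫ v : ℝ, ∫ u : ℝ, S.indicator gA (u, v) :=
      MeasureTheory.integral_integral_swap hprodA
    rw [h1, h2]
    calc (∫ v : ℝ, ∫ u : ℝ, S.indicator gA (u, v))
        = ∫ v : ℝ, (Icc t₀ V).indicator (fun v => - Atil (max L (2 * T₀ - v), v)) v := by
          congr 1; funext v; exact hinnerA v
      _ = ∫ v in Icc t₀ V, - Atil (max L (2 * T₀ - v), v) :=
          MeasureTheory.integral_indicator measurableSet_Icc
      _ = - ∫ v in t₀..V, Atil (max L (2 * T₀ - v), v) := by
          rw [MeasureTheory.integral_Icc_eq_integral_Ioc,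
            ← intervalIntegral.integral_of_le ht₀V, intervalIntegral.integral_neg]
  have hIBval : (∫ p : ℝ × ℝ, S.indicator gB p) =
      (∫ u in L..V, Btil (u, V)) - ∫ u in L..V, Btil (u, max u (2 * T₀ - u)) := by
    have h1 : (∫ p : ℝ × ℝ, S.indicator gB p) = ∫ u : ℝ, ∫ v : ℝ, S.indicator gB (u, v) := by
      rw [MeasureTheory.Measure.volume_eq_prod]
      exact MeasureTheory.integral_prod _ hIB'
    rw [h1]
    have hcont1 : ContinuousOn (fun u => Btil (u, V)) (Icc L V) :=
      contOn_comp hBc (continuous_id.prodMk continuous_const) (fun u hu => hu.2)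
    have hcont2 : ContinuousOn (fun u => Btil (u, max u (2 * T₀ - u))) (Icc L V) :=
      contOn_comp hBc
        (continuous_id.prodMk (continuous_id.max (continuous_const.sub continuous_id)))
        (fun u _ => le_max_left _ _)
    calc (∫ u : ℝ, ∫ v : ℝ, S.indicator gB (u, v))
        = ∫ u : ℝ, (Icc L V).indicator
            (fun u => Btil (u, V) - Btil (u, max u (2 * T₀ - u))) u := by
          congr 1; funext u; exact hinnerB u
      _ = ∫ u in Icc L V, (Btil (u, V) - Btil (u, max u (2 * T₀ - u))) :=
          MeasureTheory.integral_indicator measurableSet_Icc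
      _ = ∫ u in L..V, (Btil (u, V) - Btil (u, max u (2 * T₀ - u))) := by
          rw [MeasureTheory.integral_Icc_eq_integral_Ioc,
            ← intervalIntegral.integral_of_le hLV]
      _ = (∫ u in L..V, Btil (u, V)) - ∫ u in L..V, Btil (u, max u (2 * T₀ - u)) :=
          intervalIntegral.integral_sub
            (hcont1.intervalIntegrable_of_Icc hLV) (hcont2.intervalIntegrable_of_Icc hLV)
  -- the boundary term along the initial slice
  have hlower : (∫ u in L..V, Btil (u, max u (2 * T₀ - u)))
      = ∫ u in L..t₀, Btil (u, 2 * T₀ - u) := by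
    have hcont2 : ContinuousOn (fun u => Btil (u, max u (2 * T₀ - u))) (Icc L V) :=
      contOn_comp hBc
        (continuous_id.prodMk (continuous_id.max (continuous_const.sub continuous_id)))
        (fun u _ => le_max_left _ _)
    have hi1 : IntervalIntegrable (fun u => Btil (u, max u (2 * T₀ - u))) volume L t₀ :=
      ((hcont2.mono (Icc_subset_Icc le_rfl ht₀V)).intervalIntegrable_of_Icc hLt₀)
    have hi2 : IntervalIntegrable (fun u => Btil (u, max u (2 * T₀ - u))) volume t₀ V :=
      ((hcont2.mono (Icc_subset_Icc hLt₀ le_rfl)).intervalIntegrable_of_Icc ht₀V)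
    rw [← intervalIntegral.integral_add_adjacent_intervals hi1 hi2]
    have hzero2 : (∫ u in t₀..V, Btil (u, max u (2 * T₀ - u))) = 0 := by
      have hcongr : ∀ u ∈ uIcc t₀ V, Btil (u, max u (2 * T₀ - u)) = (fun _ => (0:ℝ)) u := by
        intro u hu
        rw [uIcc_of_le ht₀V] at hu
        have hT₀u : T₀ ≤ u := le_trans (le_max_left T₀ L) hu.1
        have : max u (2 * T₀ - u) = u := max_eq_left (by linarith)
        rw [this, hB0]
      rw [intervalIntegral.integral_congr hcongr]
      simp
    have hfirst : (∫ u in L..t₀, Btil (u, max u (2 * T₀ - u)))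
        = ∫ u in L..t₀, Btil (u, 2 * T₀ - u) := by
      rcases le_total L T₀ with h | h
      · have ht₀eq : t₀ = T₀ := max_eq_left h
        apply intervalIntegral.integral_congr
        intro u hu
        rw [uIcc_of_le hLt₀] at hu
        show Btil (u, max u (2 * T₀ - u)) = Btil (u, 2 * T₀ - u)
        have : max u (2 * T₀ - u) = 2 * T₀ - u := by
          apply max_eq_right
          have := hu.2
          rw [ht₀eq] at this
          linarith
        rw [this]
      · have ht₀eq : t₀ = L := max_eq_right h
        rw [ht₀eq]
        simp
    rw [hzero2, hfirst, add_zero]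
  -- the divergence-free identity
  have hdiag : (volume : Measure (ℝ × ℝ)) {p : ℝ × ℝ | p.1 = p.2} = 0 := by
    have hmeas : MeasurableSet {p : ℝ × ℝ | p.1 = p.2} :=
      (isClosed_eq continuous_fst continuous_snd).measurableSet
    rw [MeasureTheory.Measure.volume_eq_prod, MeasureTheory.Measure.prod_apply hmeas]
    have : ∀ u : ℝ, (Prod.mk u ⁻¹' {p : ℝ × ℝ | p.1 = p.2}) = {u} := by
      intro u; ext v; simp [eq_comm]
    simp [this]
  have hne : ∀ᵐ p : ℝ × ℝ, p.1 ≠ p.2 := by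
    rw [ae_iff]
    simpa [not_not] using hdiag
  have hzero : (∫ p : ℝ × ℝ, S.indicator gA p) + (∫ p : ℝ × ℝ, S.indicator gB p) = 0 := by
    rw [← MeasureTheory.integral_add hIA hIB]
    have hae : (fun p : ℝ × ℝ => S.indicator gA p + S.indicator gB p) =ᵐ[volume]
        (fun _ => (0 : ℝ)) := by
      filter_upwards [hne] with p hp
      by_cases hS : p ∈ S
      · rw [Set.indicator_of_mem hS, Set.indicator_of_mem hS]
        apply hsum
        rw [interior_Dset]
        exact lt_of_le_of_ne hS.2.1 hp
      · rw [Set.indicator_of_notMem hS, Set.indicator_of_notMem hS, add_zero]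
    rw [MeasureTheory.integral_congr_ae hae, integral_zero]
  rw [hIAval, hIBval, hlower] at hzero
  linarith

/-- Both flux estimates, for the "nice" versions of the energy currents. -/
theorem core_main (Atil Btil gA gB : ℝ × ℝ → ℝ) (T₀ E₀ : ℝ)
    (hAc : ContinuousOn Atil Dset) (hBc : ContinuousOn Btil Dset)
    (hgAc : ContinuousOn gA Dset) (hgBc : ContinuousOn gB Dset)
    (hAd : ∀ p ∈ interior Dset, HasDerivAt (fun u => Atil (u, p.2)) (gA p) p.1)
    (hBd : ∀ p ∈ interior Dset, HasDerivAt (fun v => Btil (p.1, v)) (gB p) p.2)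
    (hsum : ∀ p ∈ interior Dset, gA p + gB p = 0)
    (hA0 : ∀ u : ℝ, Atil (u, u) = 0) (hB0 : ∀ u : ℝ, Btil (u, u) = 0)
    (hApos : ∀ p ∈ Dset, 0 ≤ Atil p) (hBpos : ∀ p ∈ Dset, 0 ≤ Btil p)
    (hfin : IntegrableOn (fun R => Atil (T₀ - R, T₀ + R) + Btil (T₀ - R, T₀ + R)) (Ioi 0))
    (hI : (∫ R in Ioi (0:ℝ), (Atil (T₀ - R, T₀ + R) + Btil (T₀ - R, T₀ + R))) ≤ E₀) :
    (∀ V : ℝ, T₀ ≤ V → (∫ u in (2 * T₀ - V)..V, Btil (u, V)) ≤ E₀) ∧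
    (∀ L V : ℝ, L ≤ V → 2 * T₀ ≤ L + V →
      (∫ v in (max L (2 * T₀ - L))..V, Atil (L, v)) ≤ E₀) := by
  have part1 : ∀ V : ℝ, T₀ ≤ V → (∫ u in (2 * T₀ - V)..V, Btil (u, V)) ≤ E₀ := by
    intro V hV
    have hLV : 2 * T₀ - V ≤ V := by linarith
    have hid := flux_identity Atil Btil gA gB T₀ (2 * T₀ - V) V hAc hBc hgAc hgBc hAd hBd hsum
      hA0 hB0 hLV (by linarith)
    have ht₀ : max T₀ (2 * T₀ - V) = T₀ := max_eq_left (by linarith)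
    rw [ht₀] at hid
    have hcongr : (∫ v in T₀..V, Atil (max (2 * T₀ - V) (2 * T₀ - v), v))
        = ∫ v in T₀..V, Atil (2 * T₀ - v, v) := by
      apply intervalIntegral.integral_congr
      intro v hv
      rw [uIcc_of_le hV] at hv
      show Atil (max (2 * T₀ - V) (2 * T₀ - v), v) = Atil (2 * T₀ - v, v)
      rw [max_eq_right (by linarith [hv.2])]
    rw [hcongr] at hid
    have hsubA : (∫ v in T₀..V, Atil (2 * T₀ - v, v))
        = ∫ R in (0:ℝ)..(V - T₀), Atil (T₀ - R, T₀ + R) := by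
      calc (∫ v in T₀..V, Atil (2 * T₀ - v, v))
          = ∫ x in (T₀ + 0)..(T₀ + (V - T₀)), Atil (2 * T₀ - x, x) := by
            rw [add_zero, show T₀ + (V - T₀) = V by ring]
        _ = ∫ x in (0:ℝ)..(V - T₀), Atil (2 * T₀ - (T₀ + x), T₀ + x) :=
            (intervalIntegral.integral_comp_add_left (fun v => Atil (2 * T₀ - v, v)) T₀).symm
        _ = ∫ x in (0:ℝ)..(V - T₀), Atil (T₀ - x, T₀ + x) := by
            apply intervalIntegral.integral_congr
            intro x _
            show Atil (2 * T₀ - (T₀ + x), T₀ + x) = Atil (T₀ - x, T₀ + x)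
            rw [show 2 * T₀ - (T₀ + x) = T₀ - x by ring]
    have hsubB : (∫ u in (2 * T₀ - V)..T₀, Btil (u, 2 * T₀ - u))
        = ∫ R in (0:ℝ)..(V - T₀), Btil (T₀ - R, T₀ + R) := by
      calc (∫ u in (2 * T₀ - V)..T₀, Btil (u, 2 * T₀ - u))
          = ∫ x in (T₀ - (V - T₀))..(T₀ - 0), Btil (x, 2 * T₀ - x) := by
            rw [sub_zero, show T₀ - (V - T₀) = 2 * T₀ - V by ring]
        _ = ∫ x in (0:ℝ)..(V - T₀), Btil (T₀ - x, 2 * T₀ - (T₀ - x)) :=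
            (intervalIntegral.integral_comp_sub_left (fun u => Btil (u, 2 * T₀ - u)) T₀).symm
        _ = ∫ x in (0:ℝ)..(V - T₀), Btil (T₀ - x, T₀ + x) := by
            apply intervalIntegral.integral_congr
            intro x _
            show Btil (T₀ - x, 2 * T₀ - (T₀ - x)) = Btil (T₀ - x, T₀ + x)
            rw [show 2 * T₀ - (T₀ - x) = T₀ + x by ring]
    have hVT : (0:ℝ) ≤ V - T₀ := by linarith
    have hiA : IntervalIntegrable (fun R => Atil (T₀ - R, T₀ + R)) volume 0 (V - T₀) :=
      (contOn_comp hAc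
        ((continuous_const.sub continuous_id).prodMk (continuous_const.add continuous_id))
        (fun R hR => by dsimp only; simp only [id_eq, Pi.sub_apply, Pi.add_apply]; linarith [hR.1])).intervalIntegrable_of_Icc hVT
    have hiB : IntervalIntegrable (fun R => Btil (T₀ - R, T₀ + R)) volume 0 (V - T₀) :=
      (contOn_comp hBc
        ((continuous_const.sub continuous_id).prodMk (continuous_const.add continuous_id))
        (fun R hR => by dsimp only; simp only [id_eq, Pi.sub_apply, Pi.add_apply]; linarith [hR.1])).intervalIntegrable_of_Icc hVT
    have hadd : (∫ R in (0:ℝ)..(V - T₀), Atil (T₀ - R, T₀ + R))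
        + (∫ R in (0:ℝ)..(V - T₀), Btil (T₀ - R, T₀ + R))
        = ∫ R in (0:ℝ)..(V - T₀), (Atil (T₀ - R, T₀ + R) + Btil (T₀ - R, T₀ + R)) :=
      (intervalIntegral.integral_add hiA hiB).symm
    have hmono : (∫ R in (0:ℝ)..(V - T₀), (Atil (T₀ - R, T₀ + R) + Btil (T₀ - R, T₀ + R)))
        ≤ ∫ R in Ioi (0:ℝ), (Atil (T₀ - R, T₀ + R) + Btil (T₀ - R, T₀ + R)) := by
      rw [intervalIntegral.integral_of_le hVT]
      apply setIntegral_mono_set hfin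
      · have hae : ∀ᵐ R ∂(volume.restrict (Ioi (0:ℝ))),
            0 ≤ Atil (T₀ - R, T₀ + R) + Btil (T₀ - R, T₀ + R) := by
          rw [ae_restrict_iff' measurableSet_Ioi]
          apply ae_of_all
          intro R hR
          have hmem : ((T₀ - R, T₀ + R) : ℝ × ℝ) ∈ Dset := by
            show T₀ - R ≤ T₀ + R
            have := mem_Ioi.1 hR
            linarith
          exact add_nonneg (hApos _ hmem) (hBpos _ hmem)
        exact hae
      · exact (Ioc_subset_Ioi_self).eventuallyLE
    linarith [hid, hmono, hI, hsubA, hsubB, hadd]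
  refine ⟨part1, ?_⟩
  intro L V hLV hTLV
  have hid := flux_identity Atil Btil gA gB T₀ L V hAc hBc hgAc hgBc hAd hBd hsum hA0 hB0 hLV hTLV
  set t₀ : ℝ := max T₀ L with ht₀def
  set l₀ : ℝ := max L (2 * T₀ - L) with hl₀def
  have hT₀V : T₀ ≤ V := by linarith
  have hTl₀ : T₀ ≤ l₀ := by
    rcases le_total L T₀ with h | h
    · exact le_trans (by linarith) (le_max_right _ _)
    · exact le_trans h (le_max_left _ _)
  have ht₀l₀ : t₀ ≤ l₀ := max_le hTl₀ (le_max_left _ _)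
  have hl₀V : l₀ ≤ V := max_le hLV (by linarith)
  have ht₀V : t₀ ≤ V := le_trans ht₀l₀ hl₀V
  have hLt₀ : L ≤ t₀ := le_max_right _ _
  have hY : 0 ≤ ∫ u in L..t₀, Btil (u, 2 * T₀ - u) := by
    rcases le_total L T₀ with h | h
    · have ht₀eq : t₀ = T₀ := max_eq_left h
      rw [ht₀eq]
      apply intervalIntegral.integral_nonneg h
      intro u hu
      exact hBpos _ (show (u, 2 * T₀ - u) ∈ Dset from by show u ≤ 2 * T₀ - u; linarith [hu.2])
    · have ht₀eq : t₀ = L := max_eq_right h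
      rw [ht₀eq, intervalIntegral.integral_same]
  have hcontA : ContinuousOn (fun v => Atil (max L (2 * T₀ - v), v)) (Icc t₀ V) :=
    contOn_comp hAc
      ((continuous_const.max (continuous_const.sub continuous_id)).prodMk continuous_id)
      (fun v hv => by
        dsimp only
        simp only [id_eq, Pi.sub_apply]
        apply max_le (le_trans hLt₀ hv.1)
        have hT : T₀ ≤ v := le_trans (le_max_left _ _) hv.1
        linarith)
  have hi1 : IntervalIntegrable (fun v => Atil (max L (2 * T₀ - v), v)) volume t₀ l₀ :=
    (hcontA.mono (Icc_subset_Icc le_rfl hl₀V)).intervalIntegrable_of_Icc ht₀l₀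
  have hi2 : IntervalIntegrable (fun v => Atil (max L (2 * T₀ - v), v)) volume l₀ V :=
    (hcontA.mono (Icc_subset_Icc ht₀l₀ le_rfl)).intervalIntegrable_of_Icc hl₀V
  have hsplit : (∫ v in t₀..V, Atil (max L (2 * T₀ - v), v))
      = (∫ v in t₀..l₀, Atil (max L (2 * T₀ - v), v))
        + ∫ v in l₀..V, Atil (max L (2 * T₀ - v), v) :=
    (intervalIntegral.integral_add_adjacent_intervals hi1 hi2).symm
  have hX1 : 0 ≤ ∫ v in t₀..l₀, Atil (max L (2 * T₀ - v), v) := by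
    apply intervalIntegral.integral_nonneg ht₀l₀
    intro v hv
    apply hApos
    show max L (2 * T₀ - v) ≤ v
    apply max_le (le_trans hLt₀ hv.1)
    have hT : T₀ ≤ v := le_trans (le_max_left _ _) hv.1
    linarith
  have hX2 : (∫ v in l₀..V, Atil (max L (2 * T₀ - v), v)) = ∫ v in l₀..V, Atil (L, v) := by
    apply intervalIntegral.integral_congr
    intro v hv
    rw [uIcc_of_le hl₀V] at hv
    show Atil (max L (2 * T₀ - v), v) = Atil (L, v)
    have h2 : 2 * T₀ - L ≤ v := le_trans (le_max_right _ _) hv.1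
    rw [max_eq_left (by linarith)]
  have hBcont : ContinuousOn (fun u => Btil (u, V)) (Icc (2 * T₀ - V) V) :=
    contOn_comp hBc (continuous_id.prodMk continuous_const) (fun u hu => hu.2)
  have h2TL : 2 * T₀ - V ≤ L := by linarith
  have hbi1 : IntervalIntegrable (fun u => Btil (u, V)) volume (2 * T₀ - V) L :=
    (hBcont.mono (Icc_subset_Icc le_rfl hLV)).intervalIntegrable_of_Icc h2TL
  have hbi2 : IntervalIntegrable (fun u => Btil (u, V)) volume L V :=
    (hBcont.mono (Icc_subset_Icc h2TL le_rfl)).intervalIntegrable_of_Icc hLV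
  have hsplitB : (∫ u in (2 * T₀ - V)..V, Btil (u, V))
      = (∫ u in (2 * T₀ - V)..L, Btil (u, V)) + ∫ u in L..V, Btil (u, V) :=
    (intervalIntegral.integral_add_adjacent_intervals hbi1 hbi2).symm
  have hB1 : 0 ≤ ∫ u in (2 * T₀ - V)..L, Btil (u, V) := by
    apply intervalIntegral.integral_nonneg h2TL
    intro u hu
    exact hBpos _ (show u ≤ V from le_trans hu.2 hLV)
  have hmain := part1 V (by linarith)
  linarith [hid, hsplit, hX1, hX2, hY, hsplitB, hB1, hmain]


theorem main_aux
    (γ φ lam F G r P ep em A B : ℝ × ℝ → ℝ) (m c T₀ E₀ : ℝ) (hm : 0 ≤ m)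
    (hγ : ContDiffOn ℝ (⊤ : ℕ∞) γ Dset)
    (hφ : ContDiffOn ℝ (⊤ : ℕ∞) φ Dset)
    (hlam : ContDiffOn ℝ (⊤ : ℕ∞) lam Dset)
    (hFs : ContDiffOn ℝ (⊤ : ℕ∞) F Dset)
    (hGs : ContDiffOn ℝ (⊤ : ℕ∞) G Dset)
    (hrs : ContDiffOn ℝ (⊤ : ℕ∞) r Dset)
    (hr_nonneg : ∀ p : ℝ × ℝ, p.1 ≤ p.2 → 0 ≤ r p)
    (haxis : ∀ u : ℝ, r (u, u) = 0)
    (hconf : ∀ p : ℝ × ℝ, p.1 ≤ p.2 → 2 * lam p = F p + G p)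
    (hFbd : ∀ p : ℝ × ℝ, p.1 ≤ p.2 → |F p| ≤ c)
    (hGbd : ∀ p : ℝ × ℝ, p.1 ≤ p.2 → |G p| ≤ c)
    (hP : ∀ p : ℝ × ℝ, p.1 ≤ p.2 →
      P p = m ^ 2 * Real.exp (-2 * γ p) * (φ p) ^ 2)
    (hep : ∀ p : ℝ × ℝ, p.1 ≤ p.2 →
      ep p = 4 * Real.exp (-2 * F p) * (dv γ p) ^ 2
        + 2 * Real.exp (-2 * F p) * (dv φ p) ^ 2 + P p / 2)
    (hem : ∀ p : ℝ × ℝ, p.1 ≤ p.2 →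
      em p = 4 * Real.exp (-2 * G p) * (du γ p) ^ 2
        + 2 * Real.exp (-2 * G p) * (du φ p) ^ 2 + P p / 2)
    (hA : ∀ p : ℝ × ℝ, p.1 ≤ p.2 →
      A p = r p * Real.exp (2 * lam p) * Real.exp (-G p) * ep p)
    (hB : ∀ p : ℝ × ℝ, p.1 ≤ p.2 →
      B p = r p * Real.exp (2 * lam p) * Real.exp (-F p) * em p)
    (hdiv : ∀ p : ℝ × ℝ, p.1 ≤ p.2 → du A p + dv B p = 0)
    (hfin : IntegrableOn (fun R => A (T₀ - R, T₀ + R) + B (T₀ - R, T₀ + R)) (Ioi 0))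
    (hI : (∫ R in Ioi (0:ℝ), (A (T₀ - R, T₀ + R) + B (T₀ - R, T₀ + R))) ≤ E₀) :
    ∃ C : ℝ, 0 < C ∧ ∀ T₁ : ℝ, T₀ ≤ T₁ →
      (∀ vb : ℝ, T₀ ≤ vb →
        (∫ u' in (2 * T₀ - vb)..(min vb (2 * T₁ - vb)),
          ((du γ (u', vb)) ^ 2 + (du φ (u', vb)) ^ 2
            + m ^ 2 * Real.exp (-2 * γ (u', vb)) * (φ (u', vb)) ^ 2) * r (u', vb))
          ≤ C * E₀)
      ∧ (∀ ub : ℝ, ub ≤ T₁ →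
        (∫ v' in (max ub (2 * T₀ - ub))..(2 * T₁ - ub),
          ((dv γ (ub, v')) ^ 2 + (dv φ (ub, v')) ^ 2
            + m ^ 2 * Real.exp (-2 * γ (ub, v')) * (φ (ub, v')) ^ 2) * r (ub, v'))
          ≤ C * E₀) := by
  -- lower smoothness versions
  have hγ1 : ContDiffOn ℝ 1 γ Dset := hγ.of_le (by simp)
  have hφ1 : ContDiffOn ℝ 1 φ Dset := hφ.of_le (by simp)
  have hF1 : ContDiffOn ℝ 1 F Dset := hFs.of_le (by simp)
  have hG1 : ContDiffOn ℝ 1 G Dset := hGs.of_le (by simp)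
  have hr1 : ContDiffOn ℝ 1 r Dset := hrs.of_le (by simp)
  have hγ2 : ContDiffOn ℝ 2 γ Dset := hγ.of_le (WithTop.coe_le_coe.2 le_top)
  have hφ2 : ContDiffOn ℝ 2 φ Dset := hφ.of_le (WithTop.coe_le_coe.2 le_top)
  -- the regularized fields
  set Pt : ℝ × ℝ → ℝ := fun p => m ^ 2 * Real.exp (-2 * γ p) * (φ p) ^ 2 with hPtdef
  set gammaU : ℝ × ℝ → ℝ := fun p => fderivWithin ℝ γ Dset p ((1:ℝ), (0:ℝ)) with hgammaUdef
  set gammaV : ℝ × ℝ → ℝ := fun p => fderivWithin ℝ γ Dset p ((0:ℝ), (1:ℝ)) with hgammaVdef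
  set phiU : ℝ × ℝ → ℝ := fun p => fderivWithin ℝ φ Dset p ((1:ℝ), (0:ℝ)) with hphiUdef
  set phiV : ℝ × ℝ → ℝ := fun p => fderivWithin ℝ φ Dset p ((0:ℝ), (1:ℝ)) with hphiVdef
  set Atil : ℝ × ℝ → ℝ := fun p => r p * Real.exp (F p) *
      (4 * Real.exp (-2 * F p) * (gammaV p) ^ 2 + 2 * Real.exp (-2 * F p) * (phiV p) ^ 2
        + Pt p / 2) with hAtildef
  set Btil : ℝ × ℝ → ℝ := fun p => r p * Real.exp (G p) *
      (4 * Real.exp (-2 * G p) * (gammaU p) ^ 2 + 2 * Real.exp (-2 * G p) * (phiU p) ^ 2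
        + Pt p / 2) with hBtildef
  set gA : ℝ × ℝ → ℝ := fun p => fderivWithin ℝ Atil Dset p ((1:ℝ), (0:ℝ)) with hgAdef
  set gB : ℝ × ℝ → ℝ := fun p => fderivWithin ℝ Btil Dset p ((0:ℝ), (1:ℝ)) with hgBdef
  -- smoothness of the pieces
  have hexpγ : ContDiffOn ℝ 1 (fun p => Real.exp (-2 * γ p)) Dset :=
    (Real.contDiff_exp.of_le le_top).comp_contDiffOn (contDiffOn_const.mul hγ1)
  have hexpF : ContDiffOn ℝ 1 (fun p => Real.exp (F p)) Dset :=
    (Real.contDiff_exp.of_le le_top).comp_contDiffOn hF1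
  have hexpG : ContDiffOn ℝ 1 (fun p => Real.exp (G p)) Dset :=
    (Real.contDiff_exp.of_le le_top).comp_contDiffOn hG1
  have hexpm2F : ContDiffOn ℝ 1 (fun p => Real.exp (-2 * F p)) Dset :=
    (Real.contDiff_exp.of_le le_top).comp_contDiffOn (contDiffOn_const.mul hF1)
  have hexpm2G : ContDiffOn ℝ 1 (fun p => Real.exp (-2 * G p)) Dset :=
    (Real.contDiff_exp.of_le le_top).comp_contDiffOn (contDiffOn_const.mul hG1)
  have hPt1 : ContDiffOn ℝ 1 Pt Dset := by
    rw [hPtdef]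
    exact (contDiffOn_const.mul hexpγ).mul (hφ1.pow 2)
  have hPtpos : ∀ p : ℝ × ℝ, 0 ≤ Pt p := by
    intro p
    rw [hPtdef]
    positivity
  have hgammaU1 : ContDiffOn ℝ 1 gammaU Dset := by
    rw [hgammaUdef]; exact contDiffOn_fderivWithin_apply hγ2 _
  have hgammaV1 : ContDiffOn ℝ 1 gammaV Dset := by
    rw [hgammaVdef]; exact contDiffOn_fderivWithin_apply hγ2 _
  have hphiU1 : ContDiffOn ℝ 1 phiU Dset := by
    rw [hphiUdef]; exact contDiffOn_fderivWithin_apply hφ2 _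
  have hphiV1 : ContDiffOn ℝ 1 phiV Dset := by
    rw [hphiVdef]; exact contDiffOn_fderivWithin_apply hφ2 _
  have hAtil1 : ContDiffOn ℝ 1 Atil Dset := by
    rw [hAtildef]
    exact (hr1.mul hexpF).mul
      ((((contDiffOn_const.mul hexpm2F).mul (hgammaV1.pow 2)).add
        ((contDiffOn_const.mul hexpm2F).mul (hphiV1.pow 2))).add (hPt1.div_const 2))
  have hBtil1 : ContDiffOn ℝ 1 Btil Dset := by
    rw [hBtildef]
    exact (hr1.mul hexpG).mul
      ((((contDiffOn_const.mul hexpm2G).mul (hgammaU1.pow 2)).add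
        ((contDiffOn_const.mul hexpm2G).mul (hphiU1.pow 2))).add (hPt1.div_const 2))
  have hAc : ContinuousOn Atil Dset := hAtil1.continuousOn
  have hBc : ContinuousOn Btil Dset := hBtil1.continuousOn
  have hgAc : ContinuousOn gA Dset := by
    rw [hgAdef]; exact continuousOn_fderivWithin_apply hAtil1 _
  have hgBc : ContinuousOn gB Dset := by
    rw [hgBdef]; exact continuousOn_fderivWithin_apply hBtil1 _
  have hAd : ∀ p ∈ interior Dset, HasDerivAt (fun u => Atil (u, p.2)) (gA p) p.1 :=
    fun p hp => hasDerivAt_fst hAtil1 hp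
  have hBd : ∀ p ∈ interior Dset, HasDerivAt (fun v => Btil (p.1, v)) (gB p) p.2 :=
    fun p hp => hasDerivAt_snd hBtil1 hp
  have hA0 : ∀ u : ℝ, Atil (u, u) = 0 := by
    intro u
    rw [hAtildef]
    simp [haxis u]
  have hB0 : ∀ u : ℝ, Btil (u, u) = 0 := by
    intro u
    rw [hBtildef]
    simp [haxis u]
  have hApos : ∀ p ∈ Dset, 0 ≤ Atil p := by
    intro p hp
    rw [hAtildef]
    have h1 := hr_nonneg p hp
    have h2 := hPtpos p
    positivity
  have hBpos : ∀ p ∈ Dset, 0 ≤ Btil p := by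
    intro p hp
    rw [hBtildef]
    have h1 := hr_nonneg p hp
    have h2 := hPtpos p
    positivity
  -- A and B agree with their regularized versions on D
  have hAeq : ∀ p ∈ Dset, A p = Atil p := by
    intro p hp
    by_cases hint : p ∈ interior Dset
    · have e1 : dv γ p = gammaV p := by
        show deriv (fun v => γ (p.1, v)) p.2 = gammaV p
        rw [hgammaVdef]
        exact (hasDerivAt_snd hγ1 hint).deriv
      have e2 : dv φ p = phiV p := by
        show deriv (fun v => φ (p.1, v)) p.2 = phiV p
        rw [hphiVdef]
        exact (hasDerivAt_snd hφ1 hint).deriv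
      have hconf' : Real.exp (2 * lam p) = Real.exp (F p) * Real.exp (G p) := by
        rw [← Real.exp_add, hconf p hp]
      rw [hA p hp, hep p hp, hP p hp, e1, e2, hconf', hAtildef, hPtdef]
      have hGne : Real.exp (G p) ≠ 0 := Real.exp_ne_zero _
      rw [Real.exp_neg]
      field_simp
    · have heq : p.1 = p.2 := le_antisymm hp (by
        by_contra hlt
        push_neg at hlt
        exact hint (mem_interior_Dset hlt))
      have hr0 : r p = 0 := by
        rw [← Prod.mk.eta (p := p), ← heq]
        exact haxis p.1
      rw [hA p hp, hr0]
      simp only [hAtildef]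
      rw [hr0]
      ring
  have hBeq : ∀ p ∈ Dset, B p = Btil p := by
    intro p hp
    by_cases hint : p ∈ interior Dset
    · have e1 : du γ p = gammaU p := by
        show deriv (fun u => γ (u, p.2)) p.1 = gammaU p
        rw [hgammaUdef]
        exact (hasDerivAt_fst hγ1 hint).deriv
      have e2 : du φ p = phiU p := by
        show deriv (fun u => φ (u, p.2)) p.1 = phiU p
        rw [hphiUdef]
        exact (hasDerivAt_fst hφ1 hint).deriv
      have hconf' : Real.exp (2 * lam p) = Real.exp (F p) * Real.exp (G p) := by
        rw [← Real.exp_add, hconf p hp]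
      rw [hB p hp, hem p hp, hP p hp, e1, e2, hconf', hBtildef, hPtdef]
      rw [Real.exp_neg]
      field_simp
    · have heq : p.1 = p.2 := le_antisymm hp (by
        by_contra hlt
        push_neg at hlt
        exact hint (mem_interior_Dset hlt))
      have hr0 : r p = 0 := by
        rw [← Prod.mk.eta (p := p), ← heq]
        exact haxis p.1
      rw [hB p hp, hr0]
      simp only [hBtildef]
      rw [hr0]
      ring
  -- divergence-free identity for the regularized currents
  have hsum : ∀ p ∈ interior Dset, gA p + gB p = 0 := by
    intro p hp
    have hlt : p.1 < p.2 := by rw [interior_Dset] at hp; exact hp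
    have hd1 : du A p = gA p := by
      have hev : (fun u => A (u, p.2)) =ᶠ[𝓝 p.1] (fun u => Atil (u, p.2)) := by
        filter_upwards [Iio_mem_nhds hlt] with u hu
        have hu' : u < p.2 := hu
        exact hAeq (u, p.2) (show (u, p.2) ∈ Dset from le_of_lt hu')
      show deriv (fun u => A (u, p.2)) p.1 = gA p
      rw [hev.deriv_eq]
      exact (hasDerivAt_fst hAtil1 hp).deriv
    have hd2 : dv B p = gB p := by
      have hev : (fun v => B (p.1, v)) =ᶠ[𝓝 p.2] (fun v => Btil (p.1, v)) := by
        filter_upwards [Ioi_mem_nhds hlt] with v hv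
        have hv' : p.1 < v := hv
        exact hBeq (p.1, v) (show (p.1, v) ∈ Dset from le_of_lt hv')
      show deriv (fun v => B (p.1, v)) p.2 = gB p
      rw [hev.deriv_eq]
      exact (hasDerivAt_snd hBtil1 hp).deriv
    rw [← hd1, ← hd2]
    exact hdiv p (show p ∈ Dset from interior_subset hp)
  -- transfer the initial-energy hypotheses
  have hEqOn : EqOn (fun R => A (T₀ - R, T₀ + R) + B (T₀ - R, T₀ + R))
      (fun R => Atil (T₀ - R, T₀ + R) + Btil (T₀ - R, T₀ + R)) (Ioi 0) := by
    intro R hR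
    have hmem : ((T₀ - R, T₀ + R) : ℝ × ℝ) ∈ Dset := by
      show T₀ - R ≤ T₀ + R
      have := mem_Ioi.1 hR
      linarith
    show A (T₀ - R, T₀ + R) + B (T₀ - R, T₀ + R) = _
    rw [hAeq _ hmem, hBeq _ hmem]
  have hfin' : IntegrableOn (fun R => Atil (T₀ - R, T₀ + R) + Btil (T₀ - R, T₀ + R)) (Ioi 0) :=
    hfin.congr_fun hEqOn measurableSet_Ioi
  have hI' : (∫ R in Ioi (0:ℝ), (Atil (T₀ - R, T₀ + R) + Btil (T₀ - R, T₀ + R))) ≤ E₀ := by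
    rw [← MeasureTheory.setIntegral_congr_fun measurableSet_Ioi hEqOn]
    exact hI
  have hcore := core_main Atil Btil gA gB T₀ E₀ hAc hBc hgAc hgBc hAd hBd hsum hA0 hB0
    hApos hBpos hfin' hI'
  have hE₀ : 0 ≤ E₀ := by
    refine le_trans ?_ hI'
    apply setIntegral_nonneg measurableSet_Ioi
    intro R hR
    have hmem : ((T₀ - R, T₀ + R) : ℝ × ℝ) ∈ Dset := by
      show T₀ - R ≤ T₀ + R
      have := mem_Ioi.1 hR
      linarith
    exact add_nonneg (hApos _ hmem) (hBpos _ hmem)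
  -- continuity on D of the target integrands
  have hgammaUc : ContinuousOn gammaU Dset := hgammaU1.continuousOn
  have hgammaVc : ContinuousOn gammaV Dset := hgammaV1.continuousOn
  have hphiUc : ContinuousOn phiU Dset := hphiU1.continuousOn
  have hphiVc : ContinuousOn phiV Dset := hphiV1.continuousOn
  have hPtc : ContinuousOn Pt Dset := hPt1.continuousOn
  have hrc : ContinuousOn r Dset := hr1.continuousOn
  refine ⟨2 * Real.exp c + 1, by positivity, ?_⟩
  intro T₁ hT₁
  constructor
  · -- flux through the ingoing null segment v = vb
    intro vb hvb
    set a : ℝ := 2 * T₀ - vb with hadef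
    set M : ℝ := min vb (2 * T₁ - vb) with hMdef
    have haM : a ≤ M := le_min (by rw [hadef]; linarith) (by rw [hadef]; linarith)
    have hMvb : M ≤ vb := min_le_left _ _
    have hstep1 : (∫ u' in a..M,
        ((du γ (u', vb)) ^ 2 + (du φ (u', vb)) ^ 2
          + m ^ 2 * Real.exp (-2 * γ (u', vb)) * (φ (u', vb)) ^ 2) * r (u', vb))
        = ∫ u' in a..M,
        ((gammaU (u', vb)) ^ 2 + (phiU (u', vb)) ^ 2 + Pt (u', vb)) * r (u', vb) := by
      apply intervalIntegral.integral_congr_ae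
      have hne : ∀ᵐ u' : ℝ, u' ≠ vb := by
        rw [ae_iff]
        simp only [not_not, Set.setOf_eq_eq_singleton]
        exact measure_singleton vb
      filter_upwards [hne] with u' hne' hmem
      rw [Set.uIoc_of_le haM] at hmem
      have hint : ((u', vb) : ℝ × ℝ) ∈ interior Dset :=
        mem_interior_Dset (lt_of_le_of_ne (le_trans hmem.2 hMvb) hne')
      have e1 : du γ (u', vb) = gammaU (u', vb) := by
        show deriv (fun u => γ (u, vb)) u' = gammaU (u', vb)
        rw [hgammaUdef]
        exact (hasDerivAt_fst hγ1 hint).deriv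
      have e2 : du φ (u', vb) = phiU (u', vb) := by
        show deriv (fun u => φ (u, vb)) u' = phiU (u', vb)
        rw [hphiUdef]
        exact (hasDerivAt_fst hφ1 hint).deriv
      show ((du γ (u', vb)) ^ 2 + (du φ (u', vb)) ^ 2
          + m ^ 2 * Real.exp (-2 * γ (u', vb)) * (φ (u', vb)) ^ 2) * r (u', vb)
        = ((gammaU (u', vb)) ^ 2 + (phiU (u', vb)) ^ 2 + Pt (u', vb)) * r (u', vb)
      rw [e1, e2, hPtdef]
    have hmaps : ∀ u ∈ Icc a vb, ((u, vb) : ℝ × ℝ).1 ≤ ((u, vb) : ℝ × ℝ).2 :=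
      fun u hu => hu.2
    have hnicecont : ContinuousOn
        (fun u' => ((gammaU (u', vb)) ^ 2 + (phiU (u', vb)) ^ 2 + Pt (u', vb)) * r (u', vb))
        (Icc a vb) := by
      have c1 : ContinuousOn (fun u' => gammaU (u', vb)) (Icc a vb) :=
        contOn_comp hgammaUc (continuous_id.prodMk continuous_const) hmaps
      have c2 : ContinuousOn (fun u' => phiU (u', vb)) (Icc a vb) :=
        contOn_comp hphiUc (continuous_id.prodMk continuous_const) hmaps
      have c3 : ContinuousOn (fun u' => Pt (u', vb)) (Icc a vb) :=
        contOn_comp hPtc (continuous_id.prodMk continuous_const) hmaps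
      have c4 : ContinuousOn (fun u' => r (u', vb)) (Icc a vb) :=
        contOn_comp hrc (continuous_id.prodMk continuous_const) hmaps
      exact (((c1.pow 2).add (c2.pow 2)).add c3).mul c4
    have hBcont : ContinuousOn (fun u' => Btil (u', vb)) (Icc a vb) :=
      contOn_comp hBc (continuous_id.prodMk continuous_const) hmaps
    have hptwise : ∀ u' ∈ Icc a M,
        ((gammaU (u', vb)) ^ 2 + (phiU (u', vb)) ^ 2 + Pt (u', vb)) * r (u', vb)
          ≤ 2 * Real.exp c * Btil (u', vb) := by
      intro u' hu'
      have hmem : ((u', vb) : ℝ × ℝ) ∈ Dset := show u' ≤ vb from le_trans hu'.2 hMvb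
      have hb := bound_aux (sq_nonneg (gammaU (u', vb))) (sq_nonneg (phiU (u', vb)))
        (hPtpos (u', vb)) (hr_nonneg _ hmem) (hGbd _ hmem)
      rw [hBtildef]
      exact hb
    have hstep2 : (∫ u' in a..M,
        ((gammaU (u', vb)) ^ 2 + (phiU (u', vb)) ^ 2 + Pt (u', vb)) * r (u', vb))
        ≤ ∫ u' in a..M, 2 * Real.exp c * Btil (u', vb) :=
      intervalIntegral.integral_mono_on haM
        ((hnicecont.mono (Icc_subset_Icc le_rfl hMvb)).intervalIntegrable_of_Icc haM)
        (((continuousOn_const.mul hBcont).mono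
          (Icc_subset_Icc le_rfl hMvb)).intervalIntegrable_of_Icc haM)
        hptwise
    have hsplitB : (∫ u' in a..vb, Btil (u', vb))
        = (∫ u' in a..M, Btil (u', vb)) + ∫ u' in M..vb, Btil (u', vb) :=
      (intervalIntegral.integral_add_adjacent_intervals
        ((hBcont.mono (Icc_subset_Icc le_rfl hMvb)).intervalIntegrable_of_Icc haM)
        ((hBcont.mono (Icc_subset_Icc haM le_rfl)).intervalIntegrable_of_Icc hMvb)).symm
    have hpos2 : 0 ≤ ∫ u' in M..vb, Btil (u', vb) := by
      apply intervalIntegral.integral_nonneg hMvb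
      intro u hu
      exact hBpos _ (show u ≤ vb from hu.2)
    have hmain := hcore.1 vb hvb
    have hstep3 : (∫ u' in a..M, 2 * Real.exp c * Btil (u', vb)) ≤ 2 * Real.exp c * E₀ := by
      rw [intervalIntegral.integral_const_mul]
      apply mul_le_mul_of_nonneg_left _ (by positivity)
      rw [hadef] at hsplitB ⊢
      linarith
    rw [hstep1]
    have hfinal : 2 * Real.exp c * E₀ ≤ (2 * Real.exp c + 1) * E₀ := by nlinarith [hE₀]
    linarith
  · -- flux through the outgoing null segment u = ub
    intro ub hub
    set l₀ : ℝ := max ub (2 * T₀ - ub) with hl₀def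
    set V : ℝ := 2 * T₁ - ub with hVdef
    have hubV : ub ≤ V := by rw [hVdef]; linarith
    have hl₀V : l₀ ≤ V := max_le hubV (by rw [hVdef]; linarith)
    have hubl₀ : ub ≤ l₀ := le_max_left _ _
    have hstep1 : (∫ v' in l₀..V,
        ((dv γ (ub, v')) ^ 2 + (dv φ (ub, v')) ^ 2
          + m ^ 2 * Real.exp (-2 * γ (ub, v')) * (φ (ub, v')) ^ 2) * r (ub, v'))
        = ∫ v' in l₀..V,
        ((gammaV (ub, v')) ^ 2 + (phiV (ub, v')) ^ 2 + Pt (ub, v')) * r (ub, v') := by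
      apply intervalIntegral.integral_congr_ae
      apply ae_of_all
      intro v' hmem
      rw [Set.uIoc_of_le hl₀V] at hmem
      have hint : ((ub, v') : ℝ × ℝ) ∈ interior Dset :=
        mem_interior_Dset (lt_of_le_of_lt hubl₀ hmem.1)
      have e1 : dv γ (ub, v') = gammaV (ub, v') := by
        show deriv (fun v => γ (ub, v)) v' = gammaV (ub, v')
        rw [hgammaVdef]
        exact (hasDerivAt_snd hγ1 hint).deriv
      have e2 : dv φ (ub, v') = phiV (ub, v') := by
        show deriv (fun v => φ (ub, v)) v' = phiV (ub, v')
        rw [hphiVdef]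
        exact (hasDerivAt_snd hφ1 hint).deriv
      show ((dv γ (ub, v')) ^ 2 + (dv φ (ub, v')) ^ 2
          + m ^ 2 * Real.exp (-2 * γ (ub, v')) * (φ (ub, v')) ^ 2) * r (ub, v')
        = ((gammaV (ub, v')) ^ 2 + (phiV (ub, v')) ^ 2 + Pt (ub, v')) * r (ub, v')
      rw [e1, e2, hPtdef]
    have hmaps : ∀ v ∈ Icc l₀ V, ((ub, v) : ℝ × ℝ).1 ≤ ((ub, v) : ℝ × ℝ).2 :=
      fun v hv => le_trans hubl₀ hv.1
    have hnicecont : ContinuousOn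
        (fun v' => ((gammaV (ub, v')) ^ 2 + (phiV (ub, v')) ^ 2 + Pt (ub, v')) * r (ub, v'))
        (Icc l₀ V) := by
      have c1 : ContinuousOn (fun v' => gammaV (ub, v')) (Icc l₀ V) :=
        contOn_comp hgammaVc (continuous_const.prodMk continuous_id) hmaps
      have c2 : ContinuousOn (fun v' => phiV (ub, v')) (Icc l₀ V) :=
        contOn_comp hphiVc (continuous_const.prodMk continuous_id) hmaps
      have c3 : ContinuousOn (fun v' => Pt (ub, v')) (Icc l₀ V) :=
        contOn_comp hPtc (continuous_const.prodMk continuous_id) hmaps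
      have c4 : ContinuousOn (fun v' => r (ub, v')) (Icc l₀ V) :=
        contOn_comp hrc (continuous_const.prodMk continuous_id) hmaps
      exact (((c1.pow 2).add (c2.pow 2)).add c3).mul c4
    have hAcont : ContinuousOn (fun v' => Atil (ub, v')) (Icc l₀ V) :=
      contOn_comp hAc (continuous_const.prodMk continuous_id) hmaps
    have hptwise : ∀ v' ∈ Icc l₀ V,
        ((gammaV (ub, v')) ^ 2 + (phiV (ub, v')) ^ 2 + Pt (ub, v')) * r (ub, v')
          ≤ 2 * Real.exp c * Atil (ub, v') := by
      intro v' hv'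
      have hmem : ((ub, v') : ℝ × ℝ) ∈ Dset := show ub ≤ v' from le_trans hubl₀ hv'.1
      have hb := bound_aux (sq_nonneg (gammaV (ub, v'))) (sq_nonneg (phiV (ub, v')))
        (hPtpos (ub, v')) (hr_nonneg _ hmem) (hFbd _ hmem)
      rw [hAtildef]
      exact hb
    have hstep2 : (∫ v' in l₀..V,
        ((gammaV (ub, v')) ^ 2 + (phiV (ub, v')) ^ 2 + Pt (ub, v')) * r (ub, v'))
        ≤ ∫ v' in l₀..V, 2 * Real.exp c * Atil (ub, v') :=
      intervalIntegral.integral_mono_on hl₀V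
        (hnicecont.intervalIntegrable_of_Icc hl₀V)
        ((continuousOn_const.mul hAcont).intervalIntegrable_of_Icc hl₀V)
        hptwise
    have hmain := hcore.2 ub V hubV (by rw [hVdef]; linarith)
    have hstep3 : (∫ v' in l₀..V, 2 * Real.exp c * Atil (ub, v')) ≤ 2 * Real.exp c * E₀ := by
      rw [intervalIntegral.integral_const_mul]
      apply mul_le_mul_of_nonneg_left _ (by positivity)
      rw [hl₀def]
      exact hmain
    rw [hstep1]
    have hfinal : 2 * Real.exp c * E₀ ≤ (2 * Real.exp c + 1) * E₀ := by nlinarith [hE₀]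
    linarith

end NullFluxAux

/-- Proposition 4.6: null energy flux estimates for the
Einstein-wave-Klein-Gordon system in null coordinates: the flux of the matter fields
through null line segments between the slices `T = T₀` and `T = T₁` is bounded by a
constant (depending only on `c`) times the initial energy `E₀`. -/
theorem null_flux_estimates
    (γ φ lam F G r P ep em A B : ℝ × ℝ → ℝ) (m c T₀ E₀ : ℝ) (hm : 0 ≤ m)
    (hγ : ContDiffOn ℝ (⊤ : ℕ∞) γ {p : ℝ × ℝ | p.1 ≤ p.2})
    (hφ : ContDiffOn ℝ (⊤ : ℕ∞) φ {p : ℝ × ℝ | p.1 ≤ p.2})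
    (hlam : ContDiffOn ℝ (⊤ : ℕ∞) lam {p : ℝ × ℝ | p.1 ≤ p.2})
    (hFs : ContDiffOn ℝ (⊤ : ℕ∞) F {p : ℝ × ℝ | p.1 ≤ p.2})
    (hGs : ContDiffOn ℝ (⊤ : ℕ∞) G {p : ℝ × ℝ | p.1 ≤ p.2})
    (hrs : ContDiffOn ℝ (⊤ : ℕ∞) r {p : ℝ × ℝ | p.1 ≤ p.2})
    (hr_nonneg : ∀ p : ℝ × ℝ, p.1 ≤ p.2 → 0 ≤ r p)
    (haxis : ∀ u : ℝ, r (u, u) = 0)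
    (hconf : ∀ p : ℝ × ℝ, p.1 ≤ p.2 → 2 * lam p = F p + G p)
    (hFbd : ∀ p : ℝ × ℝ, p.1 ≤ p.2 → |F p| ≤ c)
    (hGbd : ∀ p : ℝ × ℝ, p.1 ≤ p.2 → |G p| ≤ c)
    (hP : ∀ p : ℝ × ℝ, p.1 ≤ p.2 →
      P p = m ^ 2 * Real.exp (-2 * γ p) * (φ p) ^ 2)
    (hep : ∀ p : ℝ × ℝ, p.1 ≤ p.2 →
      ep p = 4 * Real.exp (-2 * F p) * (dv γ p) ^ 2
        + 2 * Real.exp (-2 * F p) * (dv φ p) ^ 2 + P p / 2)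
    (hem : ∀ p : ℝ × ℝ, p.1 ≤ p.2 →
      em p = 4 * Real.exp (-2 * G p) * (du γ p) ^ 2
        + 2 * Real.exp (-2 * G p) * (du φ p) ^ 2 + P p / 2)
    (hA : ∀ p : ℝ × ℝ, p.1 ≤ p.2 →
      A p = r p * Real.exp (2 * lam p) * Real.exp (-G p) * ep p)
    (hB : ∀ p : ℝ × ℝ, p.1 ≤ p.2 →
      B p = r p * Real.exp (2 * lam p) * Real.exp (-F p) * em p)
    (hdiv : ∀ p : ℝ × ℝ, p.1 ≤ p.2 → du A p + dv B p = 0)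
    (hfin : IntegrableOn (fun R => A (T₀ - R, T₀ + R) + B (T₀ - R, T₀ + R)) (Ioi 0))
    (hI : (∫ R in Ioi (0:ℝ), (A (T₀ - R, T₀ + R) + B (T₀ - R, T₀ + R))) ≤ E₀) :
    ∃ C : ℝ, 0 < C ∧ ∀ T₁ : ℝ, T₀ ≤ T₁ →
      (∀ vb : ℝ, T₀ ≤ vb →
        (∫ u' in (2 * T₀ - vb)..(min vb (2 * T₁ - vb)),
          ((du γ (u', vb)) ^ 2 + (du φ (u', vb)) ^ 2
            + m ^ 2 * Real.exp (-2 * γ (u', vb)) * (φ (u', vb)) ^ 2) * r (u', vb))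
          ≤ C * E₀)
      ∧ (∀ ub : ℝ, ub ≤ T₁ →
        (∫ v' in (max ub (2 * T₀ - ub))..(2 * T₁ - ub),
          ((dv γ (ub, v')) ^ 2 + (dv φ (ub, v')) ^ 2
            + m ^ 2 * Real.exp (-2 * γ (ub, v')) * (φ (ub, v')) ^ 2) * r (ub, v'))
          ≤ C * E₀) :=
  NullFluxAux.main_aux γ φ lam F G r P ep em A B m c T₀ E₀ hm hγ hφ hlam hFs hGs hrs
    hr_nonneg haxis hconf hFbd hGbd hP hep hem hA hB hdiv hfin hI
end
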